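/- arXiv:2506.17216 — 3 statements merged into one kernel-verified Lean document; each statement's English description precedes it below -/
import Mathlib

section
/- If 𝒟 is a symmetric (15,8,4)-design of type (C2), then the action of Aut(𝒟) on the point set Fin 15 has exactly two orbits, of sizes 3 and 12, and the action of Aut(𝒟) on the set of blocks (where σ sends a block B to its image σ(B)) also has exactly two orbits, of sizes 3 and 12. -/
/-- A symmetric (15,8,4)-design: 15 blocks, each an 8-element subset of `Fin 15`,
any two distinct blocks meeting in exactly 4 points. -/
def IsDesign (B : Finset (Finset (Fin 15))) : Prop :=
  B.card = 15 ∧ (∀ b ∈ B, b.card = 8) ∧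
    ∀ b ∈ B, ∀ b' ∈ B, b ≠ b' → (b ∩ b').card = 4

private lemma exists_preimage' {β : Type*} [Finite β] {P : β → Prop} {F : β → β}
    (hF : Function.Injective F) (h : ∀ b, P b → P (F b)) {b : β} (hb : P b) :
    ∃ b', P b' ∧ F b' = b := by
  have hGinj : Function.Injective (fun x : {x // P x} => (⟨F x.1, h _ x.2⟩ : {x // P x})) := by
    intro x y hxy
    exact Subtype.ext (hF (congrArg Subtype.val hxy))
  obtain ⟨x, hx⟩ := (Finite.injective_iff_surjective.mp hGinj) ⟨b, hb⟩
  exact ⟨x.1, x.2, congrArg Subtype.val hx⟩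

/-- The full automorphism group of the design with block family `B`. -/
def designAut (B : Finset (Finset (Fin 15))) : Subgroup (Equiv.Perm (Fin 15)) where
  carrier := {σ | ∀ b ∈ B, b.image ⇑σ ∈ B}
  one_mem' := by intro b hb; simpa using hb
  mul_mem' := by
    intro a c ha hc b hb
    have := ha _ (hc b hb)
    simpa [Finset.image_image, Equiv.Perm.coe_mul] using this
  inv_mem' := by
    intro σ hσ b hb
    obtain ⟨b', hb', hEq⟩ := exists_preimage' (F := fun s => Finset.image (⇑σ) s)
      (Finset.image_injective σ.injective) (fun s hs => hσ s hs) hb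
    rw [← hEq, Finset.image_image]
    have : ⇑σ⁻¹ ∘ ⇑σ = id := by
      funext x; simp
    rw [this, Finset.image_id]
    exact hb'

/-- `O` is a center point of the block family `B`. -/
def IsCenter (B : Finset (Finset (Fin 15))) (O : Finset (Fin 15)) : Prop :=
  O ∈ B ∧ ∀ b ∈ B, b ≠ O → symmDiff O b ∈ B

/-- The orbit of a point under the automorphism group of the design. -/
def pointOrbit (B : Finset (Finset (Fin 15))) (x : Fin 15) : Set (Fin 15) :=
  {y | ∃ σ ∈ designAut B, y = σ x}

/-- The orbit of a block under the automorphism group of the design. -/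
def blockOrbit (B : Finset (Finset (Fin 15))) (b : Finset (Fin 15)) :
    Set (Finset (Fin 15)) :=
  {b' | ∃ σ ∈ designAut B, b' = b.image ⇑σ}


section Infra
variable {B : Finset (Finset (Fin 15))} {σ : Equiv.Perm (Fin 15)}

lemma mem_designAut : σ ∈ designAut B ↔ ∀ b ∈ B, b.image ⇑σ ∈ B := Iff.rfl

lemma image_symmDiff' (f : Equiv.Perm (Fin 15)) (s t : Finset (Fin 15)) :
    (symmDiff s t).image ⇑f = symmDiff (s.image ⇑f) (t.image ⇑f) :=
  Finset.image_symmDiff s t f.injective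

lemma image_image_inv (s : Finset (Fin 15)) : (s.image ⇑σ).image ⇑σ⁻¹ = s := by
  rw [Finset.image_image]
  have : ⇑σ⁻¹ ∘ ⇑σ = id := by funext x; simp
  rw [this, Finset.image_id]

lemma image_inv_image (s : Finset (Fin 15)) : (s.image ⇑σ⁻¹).image ⇑σ = s := by
  rw [Finset.image_image]
  have : ⇑σ ∘ ⇑σ⁻¹ = id := by funext x; simp
  rw [this, Finset.image_id]

lemma image_center (hσ : σ ∈ designAut B) {O : Finset (Fin 15)} (hO : IsCenter B O) :
    IsCenter B (O.image ⇑σ) := by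
  refine ⟨hσ _ hO.1, ?_⟩
  intro b hb hne
  have hσi : σ⁻¹ ∈ designAut B := inv_mem hσ
  have hb' : b.image ⇑σ⁻¹ ∈ B := hσi _ hb
  have hne' : b.image ⇑σ⁻¹ ≠ O := by
    intro h
    apply hne
    rw [← h, image_inv_image]
  have h1 : symmDiff O (b.image ⇑σ⁻¹) ∈ B := hO.2 _ hb' hne'
  have h2 := hσ _ h1
  rwa [image_symmDiff', image_inv_image] at h2

lemma mem_pointOrbit_self (x : Fin 15) : x ∈ pointOrbit B x :=
  ⟨1, one_mem _, by simp⟩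

lemma pointOrbit_eq_of_mem {x y : Fin 15} (h : y ∈ pointOrbit B x) :
    pointOrbit B y = pointOrbit B x := by
  obtain ⟨σ, hσ, rfl⟩ := h
  ext z
  constructor
  · rintro ⟨τ, hτ, rfl⟩
    exact ⟨τ * σ, mul_mem hτ hσ, rfl⟩
  · rintro ⟨τ, hτ, rfl⟩
    exact ⟨τ * σ⁻¹, mul_mem hτ (inv_mem hσ), by simp⟩

lemma mem_blockOrbit_self (b : Finset (Fin 15)) : b ∈ blockOrbit B b :=
  ⟨1, one_mem _, by simp⟩

lemma blockOrbit_eq_of_mem {b c : Finset (Fin 15)} (h : c ∈ blockOrbit B b) :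
    blockOrbit B c = blockOrbit B b := by
  obtain ⟨σ, hσ, rfl⟩ := h
  ext d
  constructor
  · rintro ⟨τ, hτ, rfl⟩
    refine ⟨τ * σ, mul_mem hτ hσ, ?_⟩
    simp [Finset.image_image, Equiv.Perm.coe_mul]
  · rintro ⟨τ, hτ, rfl⟩
    refine ⟨τ * σ⁻¹, mul_mem hτ (inv_mem hσ), ?_⟩
    simp [Finset.image_image, Equiv.Perm.coe_mul]
    rw [show (⇑τ ∘ ⇑(Equiv.symm σ)) ∘ ⇑σ = ⇑τ from funext fun x => by simp]

end Infra

def O1c : Finset (Fin 15) := {0,1,2,3,4,5,6,7}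
def O2c : Finset (Fin 15) := {0,1,2,3,8,9,10,11}
def O3c : Finset (Fin 15) := {4,5,6,7,8,9,10,11}
def Uc : Finset (Fin 15) := {0,1,2,3,4,5,6,7,8,9,10,11}
def Tc : Finset (Fin 15) := {12,13,14}

def OO0f : Finset (Finset (Fin 15)) := {({0,1,4,5,8,9,13,14} : Finset (Fin 15)), ({0,1,6,7,10,11,13,14} : Finset (Fin 15)), ({2,3,4,5,10,11,13,14} : Finset (Fin 15)), ({2,3,6,7,8,9,13,14} : Finset (Fin 15))}
def OO0t : Finset (Finset (Fin 15)) := {({0,1,4,5,10,11,13,14} : Finset (Fin 15)), ({0,1,6,7,8,9,13,14} : Finset (Fin 15)), ({2,3,4,5,8,9,13,14} : Finset (Fin 15)), ({2,3,6,7,10,11,13,14} : Finset (Fin 15))}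
def OO1f : Finset (Finset (Fin 15)) := {({0,2,4,6,8,10,12,14} : Finset (Fin 15)), ({0,2,5,7,9,11,12,14} : Finset (Fin 15)), ({1,3,4,6,9,11,12,14} : Finset (Fin 15)), ({1,3,5,7,8,10,12,14} : Finset (Fin 15))}
def OO1t : Finset (Finset (Fin 15)) := {({0,2,4,6,9,11,12,14} : Finset (Fin 15)), ({0,2,5,7,8,10,12,14} : Finset (Fin 15)), ({1,3,4,6,8,10,12,14} : Finset (Fin 15)), ({1,3,5,7,9,11,12,14} : Finset (Fin 15))}
def OO2f : Finset (Finset (Fin 15)) := {({0,3,4,7,8,11,12,13} : Finset (Fin 15)), ({0,3,5,6,9,10,12,13} : Finset (Fin 15)), ({1,2,4,7,9,10,12,13} : Finset (Fin 15)), ({1,2,5,6,8,11,12,13} : Finset (Fin 15))}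
def OO2t : Finset (Finset (Fin 15)) := {({0,3,4,7,9,10,12,13} : Finset (Fin 15)), ({0,3,5,6,8,11,12,13} : Finset (Fin 15)), ({1,2,4,7,8,11,12,13} : Finset (Fin 15)), ({1,2,5,6,9,10,12,13} : Finset (Fin 15))}
def orb0 (e : Bool) : Finset (Finset (Fin 15)) := if e then OO0t else OO0f
def orb1 (e : Bool) : Finset (Finset (Fin 15)) := if e then OO1t else OO1f
def orb2 (e : Bool) : Finset (Finset (Fin 15)) := if e then OO2t else OO2f
def Cc : Finset (Finset (Fin 15)) := {O1c, O2c, O3c}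
def Dd (e1 e2 e3 : Bool) : Finset (Finset (Fin 15)) := Cc ∪ orb0 e1 ∪ orb1 e2 ∪ orb2 e3
def w1p : Equiv.Perm (Fin 15) := ⟨![1,0,3,2,5,4,7,6,8,9,10,11,12,13,14], ![1,0,3,2,5,4,7,6,8,9,10,11,12,13,14], by decide, by decide⟩
def u1p : Equiv.Perm (Fin 15) := ⟨![1,0,3,2,4,5,6,7,9,8,11,10,12,13,14], ![1,0,3,2,4,5,6,7,9,8,11,10,12,13,14], by decide, by decide⟩
def w2p : Equiv.Perm (Fin 15) := ⟨![2,3,0,1,6,7,4,5,8,9,10,11,12,13,14], ![2,3,0,1,6,7,4,5,8,9,10,11,12,13,14], by decide, by decide⟩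
def u2p : Equiv.Perm (Fin 15) := ⟨![2,3,0,1,4,5,6,7,10,11,8,9,12,13,14], ![2,3,0,1,4,5,6,7,10,11,8,9,12,13,14], by decide, by decide⟩
def w3p : Equiv.Perm (Fin 15) := ⟨![3,2,1,0,7,6,5,4,8,9,10,11,12,13,14], ![3,2,1,0,7,6,5,4,8,9,10,11,12,13,14], by decide, by decide⟩
def u3p : Equiv.Perm (Fin 15) := ⟨![3,2,1,0,4,5,6,7,11,10,9,8,12,13,14], ![3,2,1,0,4,5,6,7,11,10,9,8,12,13,14], by decide, by decide⟩
def rho000 : Equiv.Perm (Fin 15) := ⟨![4,6,7,5,8,10,11,9,0,2,3,1,13,14,12], ![8,11,9,10,0,3,1,2,4,7,5,6,14,12,13], by decide, by decide⟩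
def rho011 : Equiv.Perm (Fin 15) := ⟨![4,6,7,5,8,10,11,9,3,1,0,2,13,14,12], ![10,9,11,8,0,3,1,2,4,7,5,6,14,12,13], by decide, by decide⟩
def rho101 : Equiv.Perm (Fin 15) := ⟨![4,6,7,5,8,10,11,9,1,3,2,0,13,14,12], ![11,8,10,9,0,3,1,2,4,7,5,6,14,12,13], by decide, by decide⟩
def rho110 : Equiv.Perm (Fin 15) := ⟨![4,6,7,5,8,10,11,9,2,0,1,3,13,14,12], ![9,10,8,11,0,3,1,2,4,7,5,6,14,12,13], by decide, by decide⟩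

lemma mem_Dd_cases {b : Finset (Fin 15)} {e1 e2 e3 : Bool} (hb : b ∈ Dd e1 e2 e3) :
    b ∈ Cc ∨ b ∈ orb0 e1 ∨ b ∈ orb1 e2 ∨ b ∈ orb2 e3 := by
  simp only [Dd, Finset.mem_union] at hb
  tauto

lemma cc_sub {e1 e2 e3 : Bool} : Cc ⊆ Dd e1 e2 e3 := by
  intro b hb; simp only [Dd, Finset.mem_union]; tauto
lemma orb0_sub {e1 e2 e3 : Bool} : orb0 e1 ⊆ Dd e1 e2 e3 := by
  intro b hb; simp only [Dd, Finset.mem_union]; tauto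
lemma orb1_sub {e1 e2 e3 : Bool} : orb1 e2 ⊆ Dd e1 e2 e3 := by
  intro b hb; simp only [Dd, Finset.mem_union]; tauto
lemma orb2_sub {e1 e2 e3 : Bool} : orb2 e3 ⊆ Dd e1 e2 e3 := by
  intro b hb; simp only [Dd, Finset.mem_union]; tauto

lemma w1p_cc : ∀ b ∈ Cc, b.image ⇑w1p ∈ Cc := by
  intro b hb; fin_cases hb <;> decide
lemma w1p_OO0f : ∀ b ∈ OO0f, b.image ⇑w1p ∈ OO0f := by
  intro b hb; fin_cases hb <;> decide
lemma w1p_OO0t : ∀ b ∈ OO0t, b.image ⇑w1p ∈ OO0t := by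
  intro b hb; fin_cases hb <;> decide
lemma w1p_OO1f : ∀ b ∈ OO1f, b.image ⇑w1p ∈ OO1f := by
  intro b hb; fin_cases hb <;> decide
lemma w1p_OO1t : ∀ b ∈ OO1t, b.image ⇑w1p ∈ OO1t := by
  intro b hb; fin_cases hb <;> decide
lemma w1p_OO2f : ∀ b ∈ OO2f, b.image ⇑w1p ∈ OO2f := by
  intro b hb; fin_cases hb <;> decide
lemma w1p_OO2t : ∀ b ∈ OO2t, b.image ⇑w1p ∈ OO2t := by
  intro b hb; fin_cases hb <;> decide
lemma w1p_orb0 (e : Bool) : ∀ b ∈ orb0 e, b.image ⇑w1p ∈ orb0 e := by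
  cases e
  · exact w1p_OO0f
  · exact w1p_OO0t
lemma w1p_orb1 (e : Bool) : ∀ b ∈ orb1 e, b.image ⇑w1p ∈ orb1 e := by
  cases e
  · exact w1p_OO1f
  · exact w1p_OO1t
lemma w1p_orb2 (e : Bool) : ∀ b ∈ orb2 e, b.image ⇑w1p ∈ orb2 e := by
  cases e
  · exact w1p_OO2f
  · exact w1p_OO2t
lemma w1p_mem (e1 e2 e3 : Bool) : w1p ∈ designAut (Dd e1 e2 e3) := by
  rw [mem_designAut]
  intro b hb
  rcases mem_Dd_cases hb with h | h | h | h
  · exact cc_sub (w1p_cc b h)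
  · exact orb0_sub (w1p_orb0 e1 b h)
  · exact orb1_sub (w1p_orb1 e2 b h)
  · exact orb2_sub (w1p_orb2 e3 b h)
lemma w2p_cc : ∀ b ∈ Cc, b.image ⇑w2p ∈ Cc := by
  intro b hb; fin_cases hb <;> decide
lemma w2p_OO0f : ∀ b ∈ OO0f, b.image ⇑w2p ∈ OO0f := by
  intro b hb; fin_cases hb <;> decide
lemma w2p_OO0t : ∀ b ∈ OO0t, b.image ⇑w2p ∈ OO0t := by
  intro b hb; fin_cases hb <;> decide
lemma w2p_OO1f : ∀ b ∈ OO1f, b.image ⇑w2p ∈ OO1f := by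
  intro b hb; fin_cases hb <;> decide
lemma w2p_OO1t : ∀ b ∈ OO1t, b.image ⇑w2p ∈ OO1t := by
  intro b hb; fin_cases hb <;> decide
lemma w2p_OO2f : ∀ b ∈ OO2f, b.image ⇑w2p ∈ OO2f := by
  intro b hb; fin_cases hb <;> decide
lemma w2p_OO2t : ∀ b ∈ OO2t, b.image ⇑w2p ∈ OO2t := by
  intro b hb; fin_cases hb <;> decide
lemma w2p_orb0 (e : Bool) : ∀ b ∈ orb0 e, b.image ⇑w2p ∈ orb0 e := by
  cases e
  · exact w2p_OO0f
  · exact w2p_OO0t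
lemma w2p_orb1 (e : Bool) : ∀ b ∈ orb1 e, b.image ⇑w2p ∈ orb1 e := by
  cases e
  · exact w2p_OO1f
  · exact w2p_OO1t
lemma w2p_orb2 (e : Bool) : ∀ b ∈ orb2 e, b.image ⇑w2p ∈ orb2 e := by
  cases e
  · exact w2p_OO2f
  · exact w2p_OO2t
lemma w2p_mem (e1 e2 e3 : Bool) : w2p ∈ designAut (Dd e1 e2 e3) := by
  rw [mem_designAut]
  intro b hb
  rcases mem_Dd_cases hb with h | h | h | h
  · exact cc_sub (w2p_cc b h)
  · exact orb0_sub (w2p_orb0 e1 b h)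
  · exact orb1_sub (w2p_orb1 e2 b h)
  · exact orb2_sub (w2p_orb2 e3 b h)
lemma w3p_cc : ∀ b ∈ Cc, b.image ⇑w3p ∈ Cc := by
  intro b hb; fin_cases hb <;> decide
lemma w3p_OO0f : ∀ b ∈ OO0f, b.image ⇑w3p ∈ OO0f := by
  intro b hb; fin_cases hb <;> decide
lemma w3p_OO0t : ∀ b ∈ OO0t, b.image ⇑w3p ∈ OO0t := by
  intro b hb; fin_cases hb <;> decide
lemma w3p_OO1f : ∀ b ∈ OO1f, b.image ⇑w3p ∈ OO1f := by
  intro b hb; fin_cases hb <;> decide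
lemma w3p_OO1t : ∀ b ∈ OO1t, b.image ⇑w3p ∈ OO1t := by
  intro b hb; fin_cases hb <;> decide
lemma w3p_OO2f : ∀ b ∈ OO2f, b.image ⇑w3p ∈ OO2f := by
  intro b hb; fin_cases hb <;> decide
lemma w3p_OO2t : ∀ b ∈ OO2t, b.image ⇑w3p ∈ OO2t := by
  intro b hb; fin_cases hb <;> decide
lemma w3p_orb0 (e : Bool) : ∀ b ∈ orb0 e, b.image ⇑w3p ∈ orb0 e := by
  cases e
  · exact w3p_OO0f
  · exact w3p_OO0t
lemma w3p_orb1 (e : Bool) : ∀ b ∈ orb1 e, b.image ⇑w3p ∈ orb1 e := by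
  cases e
  · exact w3p_OO1f
  · exact w3p_OO1t
lemma w3p_orb2 (e : Bool) : ∀ b ∈ orb2 e, b.image ⇑w3p ∈ orb2 e := by
  cases e
  · exact w3p_OO2f
  · exact w3p_OO2t
lemma w3p_mem (e1 e2 e3 : Bool) : w3p ∈ designAut (Dd e1 e2 e3) := by
  rw [mem_designAut]
  intro b hb
  rcases mem_Dd_cases hb with h | h | h | h
  · exact cc_sub (w3p_cc b h)
  · exact orb0_sub (w3p_orb0 e1 b h)
  · exact orb1_sub (w3p_orb1 e2 b h)
  · exact orb2_sub (w3p_orb2 e3 b h)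
lemma u1p_cc : ∀ b ∈ Cc, b.image ⇑u1p ∈ Cc := by
  intro b hb; fin_cases hb <;> decide
lemma u1p_OO0f : ∀ b ∈ OO0f, b.image ⇑u1p ∈ OO0f := by
  intro b hb; fin_cases hb <;> decide
lemma u1p_OO0t : ∀ b ∈ OO0t, b.image ⇑u1p ∈ OO0t := by
  intro b hb; fin_cases hb <;> decide
lemma u1p_OO1f : ∀ b ∈ OO1f, b.image ⇑u1p ∈ OO1f := by
  intro b hb; fin_cases hb <;> decide
lemma u1p_OO1t : ∀ b ∈ OO1t, b.image ⇑u1p ∈ OO1t := by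
  intro b hb; fin_cases hb <;> decide
lemma u1p_OO2f : ∀ b ∈ OO2f, b.image ⇑u1p ∈ OO2f := by
  intro b hb; fin_cases hb <;> decide
lemma u1p_OO2t : ∀ b ∈ OO2t, b.image ⇑u1p ∈ OO2t := by
  intro b hb; fin_cases hb <;> decide
lemma u1p_orb0 (e : Bool) : ∀ b ∈ orb0 e, b.image ⇑u1p ∈ orb0 e := by
  cases e
  · exact u1p_OO0f
  · exact u1p_OO0t
lemma u1p_orb1 (e : Bool) : ∀ b ∈ orb1 e, b.image ⇑u1p ∈ orb1 e := by
  cases e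
  · exact u1p_OO1f
  · exact u1p_OO1t
lemma u1p_orb2 (e : Bool) : ∀ b ∈ orb2 e, b.image ⇑u1p ∈ orb2 e := by
  cases e
  · exact u1p_OO2f
  · exact u1p_OO2t
lemma u1p_mem (e1 e2 e3 : Bool) : u1p ∈ designAut (Dd e1 e2 e3) := by
  rw [mem_designAut]
  intro b hb
  rcases mem_Dd_cases hb with h | h | h | h
  · exact cc_sub (u1p_cc b h)
  · exact orb0_sub (u1p_orb0 e1 b h)
  · exact orb1_sub (u1p_orb1 e2 b h)
  · exact orb2_sub (u1p_orb2 e3 b h)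
lemma u2p_cc : ∀ b ∈ Cc, b.image ⇑u2p ∈ Cc := by
  intro b hb; fin_cases hb <;> decide
lemma u2p_OO0f : ∀ b ∈ OO0f, b.image ⇑u2p ∈ OO0f := by
  intro b hb; fin_cases hb <;> decide
lemma u2p_OO0t : ∀ b ∈ OO0t, b.image ⇑u2p ∈ OO0t := by
  intro b hb; fin_cases hb <;> decide
lemma u2p_OO1f : ∀ b ∈ OO1f, b.image ⇑u2p ∈ OO1f := by
  intro b hb; fin_cases hb <;> decide
lemma u2p_OO1t : ∀ b ∈ OO1t, b.image ⇑u2p ∈ OO1t := by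
  intro b hb; fin_cases hb <;> decide
lemma u2p_OO2f : ∀ b ∈ OO2f, b.image ⇑u2p ∈ OO2f := by
  intro b hb; fin_cases hb <;> decide
lemma u2p_OO2t : ∀ b ∈ OO2t, b.image ⇑u2p ∈ OO2t := by
  intro b hb; fin_cases hb <;> decide
lemma u2p_orb0 (e : Bool) : ∀ b ∈ orb0 e, b.image ⇑u2p ∈ orb0 e := by
  cases e
  · exact u2p_OO0f
  · exact u2p_OO0t
lemma u2p_orb1 (e : Bool) : ∀ b ∈ orb1 e, b.image ⇑u2p ∈ orb1 e := by
  cases e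
  · exact u2p_OO1f
  · exact u2p_OO1t
lemma u2p_orb2 (e : Bool) : ∀ b ∈ orb2 e, b.image ⇑u2p ∈ orb2 e := by
  cases e
  · exact u2p_OO2f
  · exact u2p_OO2t
lemma u2p_mem (e1 e2 e3 : Bool) : u2p ∈ designAut (Dd e1 e2 e3) := by
  rw [mem_designAut]
  intro b hb
  rcases mem_Dd_cases hb with h | h | h | h
  · exact cc_sub (u2p_cc b h)
  · exact orb0_sub (u2p_orb0 e1 b h)
  · exact orb1_sub (u2p_orb1 e2 b h)
  · exact orb2_sub (u2p_orb2 e3 b h)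
lemma u3p_cc : ∀ b ∈ Cc, b.image ⇑u3p ∈ Cc := by
  intro b hb; fin_cases hb <;> decide
lemma u3p_OO0f : ∀ b ∈ OO0f, b.image ⇑u3p ∈ OO0f := by
  intro b hb; fin_cases hb <;> decide
lemma u3p_OO0t : ∀ b ∈ OO0t, b.image ⇑u3p ∈ OO0t := by
  intro b hb; fin_cases hb <;> decide
lemma u3p_OO1f : ∀ b ∈ OO1f, b.image ⇑u3p ∈ OO1f := by
  intro b hb; fin_cases hb <;> decide
lemma u3p_OO1t : ∀ b ∈ OO1t, b.image ⇑u3p ∈ OO1t := by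
  intro b hb; fin_cases hb <;> decide
lemma u3p_OO2f : ∀ b ∈ OO2f, b.image ⇑u3p ∈ OO2f := by
  intro b hb; fin_cases hb <;> decide
lemma u3p_OO2t : ∀ b ∈ OO2t, b.image ⇑u3p ∈ OO2t := by
  intro b hb; fin_cases hb <;> decide
lemma u3p_orb0 (e : Bool) : ∀ b ∈ orb0 e, b.image ⇑u3p ∈ orb0 e := by
  cases e
  · exact u3p_OO0f
  · exact u3p_OO0t
lemma u3p_orb1 (e : Bool) : ∀ b ∈ orb1 e, b.image ⇑u3p ∈ orb1 e := by
  cases e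
  · exact u3p_OO1f
  · exact u3p_OO1t
lemma u3p_orb2 (e : Bool) : ∀ b ∈ orb2 e, b.image ⇑u3p ∈ orb2 e := by
  cases e
  · exact u3p_OO2f
  · exact u3p_OO2t
lemma u3p_mem (e1 e2 e3 : Bool) : u3p ∈ designAut (Dd e1 e2 e3) := by
  rw [mem_designAut]
  intro b hb
  rcases mem_Dd_cases hb with h | h | h | h
  · exact cc_sub (u3p_cc b h)
  · exact orb0_sub (u3p_orb0 e1 b h)
  · exact orb1_sub (u3p_orb1 e2 b h)
  · exact orb2_sub (u3p_orb2 e3 b h)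
lemma rho000_cc : ∀ b ∈ Cc, b.image ⇑rho000 ∈ Cc := by
  intro b hb; fin_cases hb <;> decide
lemma rho000_o0 : ∀ b ∈ OO0f, b.image ⇑rho000 ∈ OO1f := by
  intro b hb; fin_cases hb <;> decide
lemma rho000_o1 : ∀ b ∈ OO1f, b.image ⇑rho000 ∈ OO2f := by
  intro b hb; fin_cases hb <;> decide
lemma rho000_o2 : ∀ b ∈ OO2f, b.image ⇑rho000 ∈ OO0f := by
  intro b hb; fin_cases hb <;> decide
lemma rho000_mem : rho000 ∈ designAut (Dd false false false) := by
  rw [mem_designAut]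
  intro b hb
  rcases mem_Dd_cases hb with h | h | h | h
  · exact cc_sub (rho000_cc b h)
  · exact orb1_sub (rho000_o0 b h)
  · exact orb2_sub (rho000_o1 b h)
  · exact orb0_sub (rho000_o2 b h)
lemma rho011_cc : ∀ b ∈ Cc, b.image ⇑rho011 ∈ Cc := by
  intro b hb; fin_cases hb <;> decide
lemma rho011_o0 : ∀ b ∈ OO0f, b.image ⇑rho011 ∈ OO1t := by
  intro b hb; fin_cases hb <;> decide
lemma rho011_o1 : ∀ b ∈ OO1t, b.image ⇑rho011 ∈ OO2t := by
  intro b hb; fin_cases hb <;> decide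
lemma rho011_o2 : ∀ b ∈ OO2t, b.image ⇑rho011 ∈ OO0f := by
  intro b hb; fin_cases hb <;> decide
lemma rho011_mem : rho011 ∈ designAut (Dd false true true) := by
  rw [mem_designAut]
  intro b hb
  rcases mem_Dd_cases hb with h | h | h | h
  · exact cc_sub (rho011_cc b h)
  · exact orb1_sub (rho011_o0 b h)
  · exact orb2_sub (rho011_o1 b h)
  · exact orb0_sub (rho011_o2 b h)
lemma rho101_cc : ∀ b ∈ Cc, b.image ⇑rho101 ∈ Cc := by
  intro b hb; fin_cases hb <;> decide
lemma rho101_o0 : ∀ b ∈ OO0t, b.image ⇑rho101 ∈ OO1f := by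
  intro b hb; fin_cases hb <;> decide
lemma rho101_o1 : ∀ b ∈ OO1f, b.image ⇑rho101 ∈ OO2t := by
  intro b hb; fin_cases hb <;> decide
lemma rho101_o2 : ∀ b ∈ OO2t, b.image ⇑rho101 ∈ OO0t := by
  intro b hb; fin_cases hb <;> decide
lemma rho101_mem : rho101 ∈ designAut (Dd true false true) := by
  rw [mem_designAut]
  intro b hb
  rcases mem_Dd_cases hb with h | h | h | h
  · exact cc_sub (rho101_cc b h)
  · exact orb1_sub (rho101_o0 b h)
  · exact orb2_sub (rho101_o1 b h)
  · exact orb0_sub (rho101_o2 b h)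
lemma rho110_cc : ∀ b ∈ Cc, b.image ⇑rho110 ∈ Cc := by
  intro b hb; fin_cases hb <;> decide
lemma rho110_o0 : ∀ b ∈ OO0t, b.image ⇑rho110 ∈ OO1t := by
  intro b hb; fin_cases hb <;> decide
lemma rho110_o1 : ∀ b ∈ OO1t, b.image ⇑rho110 ∈ OO2f := by
  intro b hb; fin_cases hb <;> decide
lemma rho110_o2 : ∀ b ∈ OO2f, b.image ⇑rho110 ∈ OO0t := by
  intro b hb; fin_cases hb <;> decide
lemma rho110_mem : rho110 ∈ designAut (Dd true true false) := by
  rw [mem_designAut]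
  intro b hb
  rcases mem_Dd_cases hb with h | h | h | h
  · exact cc_sub (rho110_cc b h)
  · exact orb1_sub (rho110_o0 b h)
  · exact orb2_sub (rho110_o1 b h)
  · exact orb0_sub (rho110_o2 b h)

theorem assembly (D : Finset (Finset (Fin 15))) (b0 : Finset (Fin 15))
    (hcent : {O | IsCenter D O} = {O1c, O2c, O3c})
    (hb0 : b0 ∈ D) (hb0n : ¬(b0 = O1c ∨ b0 = O2c ∨ b0 = O3c))
    (hptT : ∀ y ∈ Tc, (y : Fin 15) ∈ pointOrbit D 12)
    (hptU : ∀ y ∈ Uc, (y : Fin 15) ∈ pointOrbit D 0)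
    (hbl3 : ∀ c ∈ ({O1c, O2c, O3c} : Finset (Finset (Fin 15))), c ∈ blockOrbit D O1c)
    (hbl12 : ∀ c ∈ D, ¬(c = O1c ∨ c = O2c ∨ c = O3c) → c ∈ blockOrbit D b0)
    (hcard : D.card = 15) :
    (∃ S₁ S₂ : Set (Fin 15),
      {S | ∃ x : Fin 15, S = pointOrbit D x} = {S₁, S₂} ∧
      S₁.ncard = 3 ∧ S₂.ncard = 12) ∧
    (∃ T₁ T₂ : Set (Finset (Fin 15)),
      {T | ∃ b ∈ D, T = blockOrbit D b} = {T₁, T₂} ∧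
      T₁.ncard = 3 ∧ T₂.ncard = 12) := by
  have hcentIff : ∀ O, IsCenter D O ↔ (O = O1c ∨ O = O2c ∨ O = O3c) := by
    intro O
    have := Set.ext_iff.mp hcent O
    simpa using this
  -- automorphisms preserve Uc
  have hUfwd : ∀ σ ∈ designAut D, ∀ x : Fin 15, x ∈ Uc → σ x ∈ Uc := by
    intro σ hσ x hx
    have lem1 : ∀ z : Fin 15, z ∈ Uc → z ∈ O1c ∨ z ∈ O2c ∨ z ∈ O3c := by decide
    have lemO : ∀ z : Fin 15, (z ∈ O1c → z ∈ Uc) ∧ (z ∈ O2c → z ∈ Uc) ∧ (z ∈ O3c → z ∈ Uc) := by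
      decide
    have hx' := lem1 x hx
    have key : ∀ O : Finset (Fin 15), (O = O1c ∨ O = O2c ∨ O = O3c) → x ∈ O → σ x ∈ Uc := by
      intro O hO hxO
      have hc : IsCenter D O := (hcentIff O).mpr hO
      have h2 : IsCenter D (O.image ⇑σ) := image_center hσ hc
      have h3 := (hcentIff _).mp h2
      have h4 : σ x ∈ O.image ⇑σ := Finset.mem_image_of_mem _ hxO
      rcases h3 with h | h | h <;> rw [h] at h4
      · exact (lemO (σ x)).1 h4
      · exact (lemO (σ x)).2.1 h4
      · exact (lemO (σ x)).2.2 h4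
    rcases hx' with h | h | h
    · exact key O1c (Or.inl rfl) h
    · exact key O2c (Or.inr (Or.inl rfl)) h
    · exact key O3c (Or.inr (Or.inr rfl)) h
  have hUiff : ∀ σ ∈ designAut D, ∀ x : Fin 15, x ∈ Uc ↔ σ x ∈ Uc := by
    intro σ hσ x
    constructor
    · exact hUfwd σ hσ x
    · intro h
      have := hUfwd σ⁻¹ (inv_mem hσ) (σ x) h
      simpa using this
  have hS1 : pointOrbit D 12 = ↑Tc := by
    ext y
    constructor
    · rintro ⟨σ, hσ, rfl⟩
      have h12 : (12 : Fin 15) ∉ Uc := by decide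
      have : σ 12 ∉ Uc := fun h => h12 ((hUiff σ hσ 12).mpr h)
      have lem3 : ∀ z : Fin 15, z ∉ Uc → z ∈ Tc := by decide
      have : σ 12 ∈ Tc := lem3 _ this
      simpa using this
    · intro hy
      exact hptT y (by simpa using hy)
  have hS2 : pointOrbit D 0 = ↑Uc := by
    ext y
    constructor
    · rintro ⟨σ, hσ, rfl⟩
      have h0 : (0 : Fin 15) ∈ Uc := by decide
      simpa using (hUiff σ hσ 0).mp h0
    · intro hy
      exact hptU y (by simpa using hy)
  constructor
  · refine ⟨pointOrbit D 12, pointOrbit D 0, ?_, ?_, ?_⟩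
    · ext S
      simp only [Set.mem_setOf_eq, Set.mem_insert_iff, Set.mem_singleton_iff]
      constructor
      · rintro ⟨x, rfl⟩
        by_cases hx : x ∈ Uc
        · right
          apply pointOrbit_eq_of_mem
          rw [hS2]; simpa using hx
        · left
          apply pointOrbit_eq_of_mem
          rw [hS1]
          have lem3 : ∀ z : Fin 15, z ∉ Uc → z ∈ Tc := by decide
          have : x ∈ Tc := lem3 x hx
          simpa using this
      · rintro (rfl | rfl)
        exacts [⟨12, rfl⟩, ⟨0, rfl⟩]
    · rw [hS1, Set.ncard_coe_finset]; decide
    · rw [hS2, Set.ncard_coe_finset]; decide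
  · have hO1cD : O1c ∈ D := ((hcentIff O1c).mpr (Or.inl rfl)).1
    have hT1 : blockOrbit D O1c = ↑({O1c, O2c, O3c} : Finset (Finset (Fin 15))) := by
      ext c
      constructor
      · rintro ⟨σ, hσ, rfl⟩
        have hc : IsCenter D (O1c.image ⇑σ) :=
          image_center hσ ((hcentIff O1c).mpr (Or.inl rfl))
        have := (hcentIff _).mp hc
        simpa using this
      · intro hc
        exact hbl3 c (by simpa using hc)
    have hT2 : blockOrbit D b0 = ↑(D \ ({O1c, O2c, O3c} : Finset (Finset (Fin 15)))) := by
      ext c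
      constructor
      · rintro ⟨σ, hσ, rfl⟩
        have hmem : b0.image ⇑σ ∈ D := hσ _ hb0
        have hnc : ¬(b0.image ⇑σ = O1c ∨ b0.image ⇑σ = O2c ∨ b0.image ⇑σ = O3c) := by
          intro h
          have hcc : IsCenter D (b0.image ⇑σ) := (hcentIff _).mpr h
          have := image_center (inv_mem hσ) hcc
          rw [image_image_inv] at this
          exact hb0n ((hcentIff b0).mp this)
        simp only [Finset.coe_sdiff, Set.mem_diff, Finset.mem_coe, Finset.mem_sdiff]
        refine ⟨hmem, ?_⟩
        simp only [Finset.mem_insert, Finset.mem_singleton]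
        exact hnc
      · intro hc
        simp only [Finset.coe_sdiff, Set.mem_diff, Finset.mem_coe, Finset.mem_sdiff] at hc
        refine hbl12 c hc.1 ?_
        have := hc.2
        simp only [Finset.mem_insert, Finset.mem_singleton] at this
        exact this
    refine ⟨blockOrbit D O1c, blockOrbit D b0, ?_, ?_, ?_⟩
    · ext S
      simp only [Set.mem_setOf_eq, Set.mem_insert_iff, Set.mem_singleton_iff]
      constructor
      · rintro ⟨b, hbD, rfl⟩
        by_cases hbc : b = O1c ∨ b = O2c ∨ b = O3c
        · left
          apply blockOrbit_eq_of_mem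
          rw [hT1]
          simp only [Finset.coe_insert, Finset.coe_singleton, Set.mem_insert_iff,
            Set.mem_singleton_iff]
          exact hbc
        · right
          apply blockOrbit_eq_of_mem
          rw [hT2]
          simp only [Finset.coe_sdiff, Set.mem_diff, Finset.mem_coe, Finset.mem_sdiff]
          refine ⟨hbD, ?_⟩
          simpa using hbc
      · rintro (rfl | rfl)
        exacts [⟨O1c, hO1cD, rfl⟩, ⟨b0, hb0, rfl⟩]
    · rw [hT1, Set.ncard_coe_finset]; decide
    · rw [hT2, Set.ncard_coe_finset]
      have hsub : ({O1c, O2c, O3c} : Finset (Finset (Fin 15))) ⊆ D := by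
        intro c hc
        simp only [Finset.mem_insert, Finset.mem_singleton] at hc
        rcases hc with rfl | rfl | rfl
        · exact hO1cD
        · exact ((hcentIff O2c).mpr (Or.inr (Or.inl rfl))).1
        · exact ((hcentIff O3c).mpr (Or.inr (Or.inr rfl))).1
      rw [Finset.card_sdiff_of_subset hsub, hcard]
      decide

lemma sd1_OO0f : ∀ b ∈ OO0f, symmDiff O1c b ∈ OO0f := by
  intro b hb; fin_cases hb <;> decide
lemma sd1_OO0t : ∀ b ∈ OO0t, symmDiff O1c b ∈ OO0t := by
  intro b hb; fin_cases hb <;> decide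
lemma sd1_OO1f : ∀ b ∈ OO1f, symmDiff O1c b ∈ OO1f := by
  intro b hb; fin_cases hb <;> decide
lemma sd1_OO1t : ∀ b ∈ OO1t, symmDiff O1c b ∈ OO1t := by
  intro b hb; fin_cases hb <;> decide
lemma sd1_OO2f : ∀ b ∈ OO2f, symmDiff O1c b ∈ OO2f := by
  intro b hb; fin_cases hb <;> decide
lemma sd1_OO2t : ∀ b ∈ OO2t, symmDiff O1c b ∈ OO2t := by
  intro b hb; fin_cases hb <;> decide
lemma sd1_orb0 (e : Bool) : ∀ b ∈ orb0 e, symmDiff O1c b ∈ orb0 e := by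
  cases e
  · exact sd1_OO0f
  · exact sd1_OO0t
lemma sd1_orb1 (e : Bool) : ∀ b ∈ orb1 e, symmDiff O1c b ∈ orb1 e := by
  cases e
  · exact sd1_OO1f
  · exact sd1_OO1t
lemma sd1_orb2 (e : Bool) : ∀ b ∈ orb2 e, symmDiff O1c b ∈ orb2 e := by
  cases e
  · exact sd1_OO2f
  · exact sd1_OO2t
lemma isCenter_O1c (e1 e2 e3 : Bool) : IsCenter (Dd e1 e2 e3) O1c := by
  refine ⟨cc_sub (by decide), ?_⟩
  intro b hb hne
  rcases mem_Dd_cases hb with h | h | h | h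
  · refine cc_sub ?_
    fin_cases h
    · exact absurd rfl hne
    · decide
    · decide
  · exact orb0_sub (sd1_orb0 e1 b h)
  · exact orb1_sub (sd1_orb1 e2 b h)
  · exact orb2_sub (sd1_orb2 e3 b h)
lemma sd2_OO0f : ∀ b ∈ OO0f, symmDiff O2c b ∈ OO0f := by
  intro b hb; fin_cases hb <;> decide
lemma sd2_OO0t : ∀ b ∈ OO0t, symmDiff O2c b ∈ OO0t := by
  intro b hb; fin_cases hb <;> decide
lemma sd2_OO1f : ∀ b ∈ OO1f, symmDiff O2c b ∈ OO1f := by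
  intro b hb; fin_cases hb <;> decide
lemma sd2_OO1t : ∀ b ∈ OO1t, symmDiff O2c b ∈ OO1t := by
  intro b hb; fin_cases hb <;> decide
lemma sd2_OO2f : ∀ b ∈ OO2f, symmDiff O2c b ∈ OO2f := by
  intro b hb; fin_cases hb <;> decide
lemma sd2_OO2t : ∀ b ∈ OO2t, symmDiff O2c b ∈ OO2t := by
  intro b hb; fin_cases hb <;> decide
lemma sd2_orb0 (e : Bool) : ∀ b ∈ orb0 e, symmDiff O2c b ∈ orb0 e := by
  cases e
  · exact sd2_OO0f
  · exact sd2_OO0t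
lemma sd2_orb1 (e : Bool) : ∀ b ∈ orb1 e, symmDiff O2c b ∈ orb1 e := by
  cases e
  · exact sd2_OO1f
  · exact sd2_OO1t
lemma sd2_orb2 (e : Bool) : ∀ b ∈ orb2 e, symmDiff O2c b ∈ orb2 e := by
  cases e
  · exact sd2_OO2f
  · exact sd2_OO2t
lemma isCenter_O2c (e1 e2 e3 : Bool) : IsCenter (Dd e1 e2 e3) O2c := by
  refine ⟨cc_sub (by decide), ?_⟩
  intro b hb hne
  rcases mem_Dd_cases hb with h | h | h | h
  · refine cc_sub ?_
    fin_cases h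
    · decide
    · exact absurd rfl hne
    · decide
  · exact orb0_sub (sd2_orb0 e1 b h)
  · exact orb1_sub (sd2_orb1 e2 b h)
  · exact orb2_sub (sd2_orb2 e3 b h)
lemma sd3_OO0f : ∀ b ∈ OO0f, symmDiff O3c b ∈ OO0f := by
  intro b hb; fin_cases hb <;> decide
lemma sd3_OO0t : ∀ b ∈ OO0t, symmDiff O3c b ∈ OO0t := by
  intro b hb; fin_cases hb <;> decide
lemma sd3_OO1f : ∀ b ∈ OO1f, symmDiff O3c b ∈ OO1f := by
  intro b hb; fin_cases hb <;> decide
lemma sd3_OO1t : ∀ b ∈ OO1t, symmDiff O3c b ∈ OO1t := by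
  intro b hb; fin_cases hb <;> decide
lemma sd3_OO2f : ∀ b ∈ OO2f, symmDiff O3c b ∈ OO2f := by
  intro b hb; fin_cases hb <;> decide
lemma sd3_OO2t : ∀ b ∈ OO2t, symmDiff O3c b ∈ OO2t := by
  intro b hb; fin_cases hb <;> decide
lemma sd3_orb0 (e : Bool) : ∀ b ∈ orb0 e, symmDiff O3c b ∈ orb0 e := by
  cases e
  · exact sd3_OO0f
  · exact sd3_OO0t
lemma sd3_orb1 (e : Bool) : ∀ b ∈ orb1 e, symmDiff O3c b ∈ orb1 e := by
  cases e
  · exact sd3_OO1f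
  · exact sd3_OO1t
lemma sd3_orb2 (e : Bool) : ∀ b ∈ orb2 e, symmDiff O3c b ∈ orb2 e := by
  cases e
  · exact sd3_OO2f
  · exact sd3_OO2t
lemma isCenter_O3c (e1 e2 e3 : Bool) : IsCenter (Dd e1 e2 e3) O3c := by
  refine ⟨cc_sub (by decide), ?_⟩
  intro b hb hne
  rcases mem_Dd_cases hb with h | h | h | h
  · refine cc_sub ?_
    fin_cases h
    · decide
    · decide
    · exact absurd rfl hne
  · exact orb0_sub (sd3_orb0 e1 b h)
  · exact orb1_sub (sd3_orb1 e2 b h)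
  · exact orb2_sub (sd3_orb2 e3 b h)
lemma hptT_000 : ∀ y ∈ Tc, (y : Fin 15) ∈ pointOrbit (Dd false false false) 12 := by
  intro y hy
  fin_cases hy
  · exact mem_pointOrbit_self _
  · exact ⟨rho000, rho000_mem, by decide⟩
  · exact ⟨rho000 * rho000, mul_mem rho000_mem rho000_mem, by decide⟩
lemma hptU_000 : ∀ y ∈ Uc, (y : Fin 15) ∈ pointOrbit (Dd false false false) 0 := by
  intro y hy
  fin_cases hy
  · exact mem_pointOrbit_self _
  · exact ⟨w1p, w1p_mem false false false, by decide⟩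
  · exact ⟨w2p, w2p_mem false false false, by decide⟩
  · exact ⟨w3p, w3p_mem false false false, by decide⟩
  · exact ⟨rho000, rho000_mem, by decide⟩
  · exact ⟨rho000 * w3p, mul_mem (rho000_mem) (w3p_mem false false false), by decide⟩
  · exact ⟨rho000 * w1p, mul_mem (rho000_mem) (w1p_mem false false false), by decide⟩
  · exact ⟨rho000 * w2p, mul_mem (rho000_mem) (w2p_mem false false false), by decide⟩
  · exact ⟨rho000 * rho000, mul_mem (rho000_mem) (rho000_mem), by decide⟩
  · exact ⟨rho000 * rho000 * w2p, mul_mem (mul_mem (rho000_mem) (rho000_mem)) (w2p_mem false false false), by decide⟩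
  · exact ⟨rho000 * rho000 * w3p, mul_mem (mul_mem (rho000_mem) (rho000_mem)) (w3p_mem false false false), by decide⟩
  · exact ⟨rho000 * rho000 * w1p, mul_mem (mul_mem (rho000_mem) (rho000_mem)) (w1p_mem false false false), by decide⟩
lemma hbl3_000 : ∀ c ∈ ({O1c, O2c, O3c} : Finset (Finset (Fin 15))), c ∈ blockOrbit (Dd false false false) O1c := by
  intro c hc
  fin_cases hc
  · exact mem_blockOrbit_self _
  · exact ⟨rho000 * rho000, mul_mem rho000_mem rho000_mem, by decide⟩
  · exact ⟨rho000, rho000_mem, by decide⟩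
lemma hbl12_000 : ∀ c ∈ Dd false false false, ¬(c = O1c ∨ c = O2c ∨ c = O3c) → c ∈ blockOrbit (Dd false false false) ({0,1,4,5,8,9,13,14} : Finset (Fin 15)) := by
  intro c hc hnc
  rcases mem_Dd_cases hc with h | h | h | h
  · exfalso
    simp only [Cc, Finset.mem_insert, Finset.mem_singleton] at h
    exact hnc h
  · fin_cases h
    · exact mem_blockOrbit_self _
    · exact ⟨w2p * u2p, mul_mem (w2p_mem false false false) (u2p_mem false false false), by decide⟩
    · exact ⟨u2p, u2p_mem false false false, by decide⟩
    · exact ⟨w2p, w2p_mem false false false, by decide⟩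
  · fin_cases h
    · exact ⟨rho000, rho000_mem, by decide⟩
    · exact ⟨rho000 * w2p, mul_mem (rho000_mem) (w2p_mem false false false), by decide⟩
    · exact ⟨u1p * rho000, mul_mem (u1p_mem false false false) (rho000_mem), by decide⟩
    · exact ⟨w1p * rho000, mul_mem (w1p_mem false false false) (rho000_mem), by decide⟩
  · fin_cases h
    · exact ⟨rho000 * rho000, mul_mem (rho000_mem) (rho000_mem), by decide⟩
    · exact ⟨rho000 * w1p * rho000, mul_mem (mul_mem (rho000_mem) (w1p_mem false false false)) (rho000_mem), by decide⟩
    · exact ⟨u1p * rho000 * rho000, mul_mem (mul_mem (u1p_mem false false false) (rho000_mem)) (rho000_mem), by decide⟩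
    · exact ⟨w1p * rho000 * rho000, mul_mem (mul_mem (w1p_mem false false false) (rho000_mem)) (rho000_mem), by decide⟩
lemma cent_char_000 : ∀ Q, IsCenter (Dd false false false) Q → (Q = O1c ∨ Q = O2c ∨ Q = O3c) := by
  intro Q hQ
  rcases mem_Dd_cases hQ.1 with h | h | h | h
  · simp only [Cc, Finset.mem_insert, Finset.mem_singleton] at h
    exact h
  · exfalso
    fin_cases h
    · exact (by decide : symmDiff ({0,1,4,5,8,9,13,14} : Finset (Fin 15)) ({0,2,4,6,8,10,12,14} : Finset (Fin 15)) ∉ Dd false false false) (hQ.2 ({0,2,4,6,8,10,12,14} : Finset (Fin 15)) (by decide) (by decide))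
    · exact (by decide : symmDiff ({0,1,6,7,10,11,13,14} : Finset (Fin 15)) ({0,2,4,6,8,10,12,14} : Finset (Fin 15)) ∉ Dd false false false) (hQ.2 ({0,2,4,6,8,10,12,14} : Finset (Fin 15)) (by decide) (by decide))
    · exact (by decide : symmDiff ({2,3,4,5,10,11,13,14} : Finset (Fin 15)) ({0,2,4,6,8,10,12,14} : Finset (Fin 15)) ∉ Dd false false false) (hQ.2 ({0,2,4,6,8,10,12,14} : Finset (Fin 15)) (by decide) (by decide))
    · exact (by decide : symmDiff ({2,3,6,7,8,9,13,14} : Finset (Fin 15)) ({0,2,4,6,8,10,12,14} : Finset (Fin 15)) ∉ Dd false false false) (hQ.2 ({0,2,4,6,8,10,12,14} : Finset (Fin 15)) (by decide) (by decide))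
  · exfalso
    fin_cases h
    · exact (by decide : symmDiff ({0,2,4,6,8,10,12,14} : Finset (Fin 15)) ({0,1,4,5,8,9,13,14} : Finset (Fin 15)) ∉ Dd false false false) (hQ.2 ({0,1,4,5,8,9,13,14} : Finset (Fin 15)) (by decide) (by decide))
    · exact (by decide : symmDiff ({0,2,5,7,9,11,12,14} : Finset (Fin 15)) ({0,1,4,5,8,9,13,14} : Finset (Fin 15)) ∉ Dd false false false) (hQ.2 ({0,1,4,5,8,9,13,14} : Finset (Fin 15)) (by decide) (by decide))
    · exact (by decide : symmDiff ({1,3,4,6,9,11,12,14} : Finset (Fin 15)) ({0,1,4,5,8,9,13,14} : Finset (Fin 15)) ∉ Dd false false false) (hQ.2 ({0,1,4,5,8,9,13,14} : Finset (Fin 15)) (by decide) (by decide))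
    · exact (by decide : symmDiff ({1,3,5,7,8,10,12,14} : Finset (Fin 15)) ({0,1,4,5,8,9,13,14} : Finset (Fin 15)) ∉ Dd false false false) (hQ.2 ({0,1,4,5,8,9,13,14} : Finset (Fin 15)) (by decide) (by decide))
  · exfalso
    fin_cases h
    · exact (by decide : symmDiff ({0,3,4,7,8,11,12,13} : Finset (Fin 15)) ({0,1,4,5,8,9,13,14} : Finset (Fin 15)) ∉ Dd false false false) (hQ.2 ({0,1,4,5,8,9,13,14} : Finset (Fin 15)) (by decide) (by decide))
    · exact (by decide : symmDiff ({0,3,5,6,9,10,12,13} : Finset (Fin 15)) ({0,1,4,5,8,9,13,14} : Finset (Fin 15)) ∉ Dd false false false) (hQ.2 ({0,1,4,5,8,9,13,14} : Finset (Fin 15)) (by decide) (by decide))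
    · exact (by decide : symmDiff ({1,2,4,7,9,10,12,13} : Finset (Fin 15)) ({0,1,4,5,8,9,13,14} : Finset (Fin 15)) ∉ Dd false false false) (hQ.2 ({0,1,4,5,8,9,13,14} : Finset (Fin 15)) (by decide) (by decide))
    · exact (by decide : symmDiff ({1,2,5,6,8,11,12,13} : Finset (Fin 15)) ({0,1,4,5,8,9,13,14} : Finset (Fin 15)) ∉ Dd false false false) (hQ.2 ({0,1,4,5,8,9,13,14} : Finset (Fin 15)) (by decide) (by decide))
lemma hcent_000 : {O | IsCenter (Dd false false false) O} = {O1c, O2c, O3c} := by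
  ext Q
  simp only [Set.mem_setOf_eq, Set.mem_insert_iff, Set.mem_singleton_iff]
  constructor
  · exact cent_char_000 Q
  · rintro (rfl | rfl | rfl)
    exacts [isCenter_O1c false false false, isCenter_O2c false false false, isCenter_O3c false false false]
lemma good_000 :
    (∃ S₁ S₂ : Set (Fin 15),
      {S | ∃ x : Fin 15, S = pointOrbit (Dd false false false) x} = {S₁, S₂} ∧
      S₁.ncard = 3 ∧ S₂.ncard = 12) ∧
    (∃ T₁ T₂ : Set (Finset (Fin 15)),
      {T | ∃ b ∈ (Dd false false false), T = blockOrbit (Dd false false false) b} = {T₁, T₂} ∧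
      T₁.ncard = 3 ∧ T₂.ncard = 12) := by
  refine assembly (Dd false false false) ({0,1,4,5,8,9,13,14} : Finset (Fin 15)) (hcent_000) (orb0_sub (by decide)) (by decide)
    (hptT_000) (hptU_000) (hbl3_000) (hbl12_000) (by decide)
lemma hptT_011 : ∀ y ∈ Tc, (y : Fin 15) ∈ pointOrbit (Dd false true true) 12 := by
  intro y hy
  fin_cases hy
  · exact mem_pointOrbit_self _
  · exact ⟨rho011, rho011_mem, by decide⟩
  · exact ⟨rho011 * rho011, mul_mem rho011_mem rho011_mem, by decide⟩
lemma hptU_011 : ∀ y ∈ Uc, (y : Fin 15) ∈ pointOrbit (Dd false true true) 0 := by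
  intro y hy
  fin_cases hy
  · exact mem_pointOrbit_self _
  · exact ⟨w1p, w1p_mem false true true, by decide⟩
  · exact ⟨w2p, w2p_mem false true true, by decide⟩
  · exact ⟨w3p, w3p_mem false true true, by decide⟩
  · exact ⟨rho011, rho011_mem, by decide⟩
  · exact ⟨rho011 * w3p, mul_mem (rho011_mem) (w3p_mem false true true), by decide⟩
  · exact ⟨rho011 * w1p, mul_mem (rho011_mem) (w1p_mem false true true), by decide⟩
  · exact ⟨rho011 * w2p, mul_mem (rho011_mem) (w2p_mem false true true), by decide⟩
  · exact ⟨rho011 * rho011, mul_mem (rho011_mem) (rho011_mem), by decide⟩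
  · exact ⟨rho011 * rho011 * w2p, mul_mem (mul_mem (rho011_mem) (rho011_mem)) (w2p_mem false true true), by decide⟩
  · exact ⟨rho011 * rho011 * w3p, mul_mem (mul_mem (rho011_mem) (rho011_mem)) (w3p_mem false true true), by decide⟩
  · exact ⟨rho011 * rho011 * w1p, mul_mem (mul_mem (rho011_mem) (rho011_mem)) (w1p_mem false true true), by decide⟩
lemma hbl3_011 : ∀ c ∈ ({O1c, O2c, O3c} : Finset (Finset (Fin 15))), c ∈ blockOrbit (Dd false true true) O1c := by
  intro c hc
  fin_cases hc
  · exact mem_blockOrbit_self _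
  · exact ⟨rho011 * rho011, mul_mem rho011_mem rho011_mem, by decide⟩
  · exact ⟨rho011, rho011_mem, by decide⟩
lemma hbl12_011 : ∀ c ∈ Dd false true true, ¬(c = O1c ∨ c = O2c ∨ c = O3c) → c ∈ blockOrbit (Dd false true true) ({0,1,4,5,8,9,13,14} : Finset (Fin 15)) := by
  intro c hc hnc
  rcases mem_Dd_cases hc with h | h | h | h
  · exfalso
    simp only [Cc, Finset.mem_insert, Finset.mem_singleton] at h
    exact hnc h
  · fin_cases h
    · exact mem_blockOrbit_self _
    · exact ⟨w2p * u2p, mul_mem (w2p_mem false true true) (u2p_mem false true true), by decide⟩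
    · exact ⟨u2p, u2p_mem false true true, by decide⟩
    · exact ⟨w2p, w2p_mem false true true, by decide⟩
  · fin_cases h
    · exact ⟨u1p * rho011, mul_mem (u1p_mem false true true) (rho011_mem), by decide⟩
    · exact ⟨w1p * rho011, mul_mem (w1p_mem false true true) (rho011_mem), by decide⟩
    · exact ⟨rho011, rho011_mem, by decide⟩
    · exact ⟨rho011 * w2p, mul_mem (rho011_mem) (w2p_mem false true true), by decide⟩
  · fin_cases h
    · exact ⟨rho011 * w1p * rho011, mul_mem (mul_mem (rho011_mem) (w1p_mem false true true)) (rho011_mem), by decide⟩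
    · exact ⟨rho011 * rho011, mul_mem (rho011_mem) (rho011_mem), by decide⟩
    · exact ⟨w1p * rho011 * rho011, mul_mem (mul_mem (w1p_mem false true true) (rho011_mem)) (rho011_mem), by decide⟩
    · exact ⟨u1p * rho011 * rho011, mul_mem (mul_mem (u1p_mem false true true) (rho011_mem)) (rho011_mem), by decide⟩
lemma cent_char_011 : ∀ Q, IsCenter (Dd false true true) Q → (Q = O1c ∨ Q = O2c ∨ Q = O3c) := by
  intro Q hQ
  rcases mem_Dd_cases hQ.1 with h | h | h | h
  · simp only [Cc, Finset.mem_insert, Finset.mem_singleton] at h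
    exact h
  · exfalso
    fin_cases h
    · exact (by decide : symmDiff ({0,1,4,5,8,9,13,14} : Finset (Fin 15)) ({0,2,4,6,9,11,12,14} : Finset (Fin 15)) ∉ Dd false true true) (hQ.2 ({0,2,4,6,9,11,12,14} : Finset (Fin 15)) (by decide) (by decide))
    · exact (by decide : symmDiff ({0,1,6,7,10,11,13,14} : Finset (Fin 15)) ({0,2,4,6,9,11,12,14} : Finset (Fin 15)) ∉ Dd false true true) (hQ.2 ({0,2,4,6,9,11,12,14} : Finset (Fin 15)) (by decide) (by decide))
    · exact (by decide : symmDiff ({2,3,4,5,10,11,13,14} : Finset (Fin 15)) ({0,2,4,6,9,11,12,14} : Finset (Fin 15)) ∉ Dd false true true) (hQ.2 ({0,2,4,6,9,11,12,14} : Finset (Fin 15)) (by decide) (by decide))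
    · exact (by decide : symmDiff ({2,3,6,7,8,9,13,14} : Finset (Fin 15)) ({0,2,4,6,9,11,12,14} : Finset (Fin 15)) ∉ Dd false true true) (hQ.2 ({0,2,4,6,9,11,12,14} : Finset (Fin 15)) (by decide) (by decide))
  · exfalso
    fin_cases h
    · exact (by decide : symmDiff ({0,2,4,6,9,11,12,14} : Finset (Fin 15)) ({0,1,4,5,8,9,13,14} : Finset (Fin 15)) ∉ Dd false true true) (hQ.2 ({0,1,4,5,8,9,13,14} : Finset (Fin 15)) (by decide) (by decide))
    · exact (by decide : symmDiff ({0,2,5,7,8,10,12,14} : Finset (Fin 15)) ({0,1,4,5,8,9,13,14} : Finset (Fin 15)) ∉ Dd false true true) (hQ.2 ({0,1,4,5,8,9,13,14} : Finset (Fin 15)) (by decide) (by decide))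
    · exact (by decide : symmDiff ({1,3,4,6,8,10,12,14} : Finset (Fin 15)) ({0,1,4,5,8,9,13,14} : Finset (Fin 15)) ∉ Dd false true true) (hQ.2 ({0,1,4,5,8,9,13,14} : Finset (Fin 15)) (by decide) (by decide))
    · exact (by decide : symmDiff ({1,3,5,7,9,11,12,14} : Finset (Fin 15)) ({0,1,4,5,8,9,13,14} : Finset (Fin 15)) ∉ Dd false true true) (hQ.2 ({0,1,4,5,8,9,13,14} : Finset (Fin 15)) (by decide) (by decide))
  · exfalso
    fin_cases h
    · exact (by decide : symmDiff ({0,3,4,7,9,10,12,13} : Finset (Fin 15)) ({0,1,4,5,8,9,13,14} : Finset (Fin 15)) ∉ Dd false true true) (hQ.2 ({0,1,4,5,8,9,13,14} : Finset (Fin 15)) (by decide) (by decide))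
    · exact (by decide : symmDiff ({0,3,5,6,8,11,12,13} : Finset (Fin 15)) ({0,1,4,5,8,9,13,14} : Finset (Fin 15)) ∉ Dd false true true) (hQ.2 ({0,1,4,5,8,9,13,14} : Finset (Fin 15)) (by decide) (by decide))
    · exact (by decide : symmDiff ({1,2,4,7,8,11,12,13} : Finset (Fin 15)) ({0,1,4,5,8,9,13,14} : Finset (Fin 15)) ∉ Dd false true true) (hQ.2 ({0,1,4,5,8,9,13,14} : Finset (Fin 15)) (by decide) (by decide))
    · exact (by decide : symmDiff ({1,2,5,6,9,10,12,13} : Finset (Fin 15)) ({0,1,4,5,8,9,13,14} : Finset (Fin 15)) ∉ Dd false true true) (hQ.2 ({0,1,4,5,8,9,13,14} : Finset (Fin 15)) (by decide) (by decide))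
lemma hcent_011 : {O | IsCenter (Dd false true true) O} = {O1c, O2c, O3c} := by
  ext Q
  simp only [Set.mem_setOf_eq, Set.mem_insert_iff, Set.mem_singleton_iff]
  constructor
  · exact cent_char_011 Q
  · rintro (rfl | rfl | rfl)
    exacts [isCenter_O1c false true true, isCenter_O2c false true true, isCenter_O3c false true true]
lemma good_011 :
    (∃ S₁ S₂ : Set (Fin 15),
      {S | ∃ x : Fin 15, S = pointOrbit (Dd false true true) x} = {S₁, S₂} ∧
      S₁.ncard = 3 ∧ S₂.ncard = 12) ∧
    (∃ T₁ T₂ : Set (Finset (Fin 15)),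
      {T | ∃ b ∈ (Dd false true true), T = blockOrbit (Dd false true true) b} = {T₁, T₂} ∧
      T₁.ncard = 3 ∧ T₂.ncard = 12) := by
  refine assembly (Dd false true true) ({0,1,4,5,8,9,13,14} : Finset (Fin 15)) (hcent_011) (orb0_sub (by decide)) (by decide)
    (hptT_011) (hptU_011) (hbl3_011) (hbl12_011) (by decide)
lemma hptT_101 : ∀ y ∈ Tc, (y : Fin 15) ∈ pointOrbit (Dd true false true) 12 := by
  intro y hy
  fin_cases hy
  · exact mem_pointOrbit_self _
  · exact ⟨rho101, rho101_mem, by decide⟩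
  · exact ⟨rho101 * rho101, mul_mem rho101_mem rho101_mem, by decide⟩
lemma hptU_101 : ∀ y ∈ Uc, (y : Fin 15) ∈ pointOrbit (Dd true false true) 0 := by
  intro y hy
  fin_cases hy
  · exact mem_pointOrbit_self _
  · exact ⟨w1p, w1p_mem true false true, by decide⟩
  · exact ⟨w2p, w2p_mem true false true, by decide⟩
  · exact ⟨w3p, w3p_mem true false true, by decide⟩
  · exact ⟨rho101, rho101_mem, by decide⟩
  · exact ⟨rho101 * w3p, mul_mem (rho101_mem) (w3p_mem true false true), by decide⟩
  · exact ⟨rho101 * w1p, mul_mem (rho101_mem) (w1p_mem true false true), by decide⟩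
  · exact ⟨rho101 * w2p, mul_mem (rho101_mem) (w2p_mem true false true), by decide⟩
  · exact ⟨rho101 * rho101, mul_mem (rho101_mem) (rho101_mem), by decide⟩
  · exact ⟨rho101 * rho101 * w2p, mul_mem (mul_mem (rho101_mem) (rho101_mem)) (w2p_mem true false true), by decide⟩
  · exact ⟨rho101 * rho101 * w3p, mul_mem (mul_mem (rho101_mem) (rho101_mem)) (w3p_mem true false true), by decide⟩
  · exact ⟨rho101 * rho101 * w1p, mul_mem (mul_mem (rho101_mem) (rho101_mem)) (w1p_mem true false true), by decide⟩
lemma hbl3_101 : ∀ c ∈ ({O1c, O2c, O3c} : Finset (Finset (Fin 15))), c ∈ blockOrbit (Dd true false true) O1c := by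
  intro c hc
  fin_cases hc
  · exact mem_blockOrbit_self _
  · exact ⟨rho101 * rho101, mul_mem rho101_mem rho101_mem, by decide⟩
  · exact ⟨rho101, rho101_mem, by decide⟩
lemma hbl12_101 : ∀ c ∈ Dd true false true, ¬(c = O1c ∨ c = O2c ∨ c = O3c) → c ∈ blockOrbit (Dd true false true) ({0,1,4,5,10,11,13,14} : Finset (Fin 15)) := by
  intro c hc hnc
  rcases mem_Dd_cases hc with h | h | h | h
  · exfalso
    simp only [Cc, Finset.mem_insert, Finset.mem_singleton] at h
    exact hnc h
  · fin_cases h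
    · exact mem_blockOrbit_self _
    · exact ⟨w2p * u2p, mul_mem (w2p_mem true false true) (u2p_mem true false true), by decide⟩
    · exact ⟨u2p, u2p_mem true false true, by decide⟩
    · exact ⟨w2p, w2p_mem true false true, by decide⟩
  · fin_cases h
    · exact ⟨rho101, rho101_mem, by decide⟩
    · exact ⟨rho101 * w2p, mul_mem (rho101_mem) (w2p_mem true false true), by decide⟩
    · exact ⟨u1p * rho101, mul_mem (u1p_mem true false true) (rho101_mem), by decide⟩
    · exact ⟨w1p * rho101, mul_mem (w1p_mem true false true) (rho101_mem), by decide⟩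
  · fin_cases h
    · exact ⟨u1p * rho101 * rho101, mul_mem (mul_mem (u1p_mem true false true) (rho101_mem)) (rho101_mem), by decide⟩
    · exact ⟨w1p * rho101 * rho101, mul_mem (mul_mem (w1p_mem true false true) (rho101_mem)) (rho101_mem), by decide⟩
    · exact ⟨rho101 * rho101, mul_mem (rho101_mem) (rho101_mem), by decide⟩
    · exact ⟨rho101 * w1p * rho101, mul_mem (mul_mem (rho101_mem) (w1p_mem true false true)) (rho101_mem), by decide⟩
lemma cent_char_101 : ∀ Q, IsCenter (Dd true false true) Q → (Q = O1c ∨ Q = O2c ∨ Q = O3c) := by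
  intro Q hQ
  rcases mem_Dd_cases hQ.1 with h | h | h | h
  · simp only [Cc, Finset.mem_insert, Finset.mem_singleton] at h
    exact h
  · exfalso
    fin_cases h
    · exact (by decide : symmDiff ({0,1,4,5,10,11,13,14} : Finset (Fin 15)) ({0,2,4,6,8,10,12,14} : Finset (Fin 15)) ∉ Dd true false true) (hQ.2 ({0,2,4,6,8,10,12,14} : Finset (Fin 15)) (by decide) (by decide))
    · exact (by decide : symmDiff ({0,1,6,7,8,9,13,14} : Finset (Fin 15)) ({0,2,4,6,8,10,12,14} : Finset (Fin 15)) ∉ Dd true false true) (hQ.2 ({0,2,4,6,8,10,12,14} : Finset (Fin 15)) (by decide) (by decide))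
    · exact (by decide : symmDiff ({2,3,4,5,8,9,13,14} : Finset (Fin 15)) ({0,2,4,6,8,10,12,14} : Finset (Fin 15)) ∉ Dd true false true) (hQ.2 ({0,2,4,6,8,10,12,14} : Finset (Fin 15)) (by decide) (by decide))
    · exact (by decide : symmDiff ({2,3,6,7,10,11,13,14} : Finset (Fin 15)) ({0,2,4,6,8,10,12,14} : Finset (Fin 15)) ∉ Dd true false true) (hQ.2 ({0,2,4,6,8,10,12,14} : Finset (Fin 15)) (by decide) (by decide))
  · exfalso
    fin_cases h
    · exact (by decide : symmDiff ({0,2,4,6,8,10,12,14} : Finset (Fin 15)) ({0,1,4,5,10,11,13,14} : Finset (Fin 15)) ∉ Dd true false true) (hQ.2 ({0,1,4,5,10,11,13,14} : Finset (Fin 15)) (by decide) (by decide))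
    · exact (by decide : symmDiff ({0,2,5,7,9,11,12,14} : Finset (Fin 15)) ({0,1,4,5,10,11,13,14} : Finset (Fin 15)) ∉ Dd true false true) (hQ.2 ({0,1,4,5,10,11,13,14} : Finset (Fin 15)) (by decide) (by decide))
    · exact (by decide : symmDiff ({1,3,4,6,9,11,12,14} : Finset (Fin 15)) ({0,1,4,5,10,11,13,14} : Finset (Fin 15)) ∉ Dd true false true) (hQ.2 ({0,1,4,5,10,11,13,14} : Finset (Fin 15)) (by decide) (by decide))
    · exact (by decide : symmDiff ({1,3,5,7,8,10,12,14} : Finset (Fin 15)) ({0,1,4,5,10,11,13,14} : Finset (Fin 15)) ∉ Dd true false true) (hQ.2 ({0,1,4,5,10,11,13,14} : Finset (Fin 15)) (by decide) (by decide))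
  · exfalso
    fin_cases h
    · exact (by decide : symmDiff ({0,3,4,7,9,10,12,13} : Finset (Fin 15)) ({0,1,4,5,10,11,13,14} : Finset (Fin 15)) ∉ Dd true false true) (hQ.2 ({0,1,4,5,10,11,13,14} : Finset (Fin 15)) (by decide) (by decide))
    · exact (by decide : symmDiff ({0,3,5,6,8,11,12,13} : Finset (Fin 15)) ({0,1,4,5,10,11,13,14} : Finset (Fin 15)) ∉ Dd true false true) (hQ.2 ({0,1,4,5,10,11,13,14} : Finset (Fin 15)) (by decide) (by decide))
    · exact (by decide : symmDiff ({1,2,4,7,8,11,12,13} : Finset (Fin 15)) ({0,1,4,5,10,11,13,14} : Finset (Fin 15)) ∉ Dd true false true) (hQ.2 ({0,1,4,5,10,11,13,14} : Finset (Fin 15)) (by decide) (by decide))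
    · exact (by decide : symmDiff ({1,2,5,6,9,10,12,13} : Finset (Fin 15)) ({0,1,4,5,10,11,13,14} : Finset (Fin 15)) ∉ Dd true false true) (hQ.2 ({0,1,4,5,10,11,13,14} : Finset (Fin 15)) (by decide) (by decide))
lemma hcent_101 : {O | IsCenter (Dd true false true) O} = {O1c, O2c, O3c} := by
  ext Q
  simp only [Set.mem_setOf_eq, Set.mem_insert_iff, Set.mem_singleton_iff]
  constructor
  · exact cent_char_101 Q
  · rintro (rfl | rfl | rfl)
    exacts [isCenter_O1c true false true, isCenter_O2c true false true, isCenter_O3c true false true]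
lemma good_101 :
    (∃ S₁ S₂ : Set (Fin 15),
      {S | ∃ x : Fin 15, S = pointOrbit (Dd true false true) x} = {S₁, S₂} ∧
      S₁.ncard = 3 ∧ S₂.ncard = 12) ∧
    (∃ T₁ T₂ : Set (Finset (Fin 15)),
      {T | ∃ b ∈ (Dd true false true), T = blockOrbit (Dd true false true) b} = {T₁, T₂} ∧
      T₁.ncard = 3 ∧ T₂.ncard = 12) := by
  refine assembly (Dd true false true) ({0,1,4,5,10,11,13,14} : Finset (Fin 15)) (hcent_101) (orb0_sub (by decide)) (by decide)
    (hptT_101) (hptU_101) (hbl3_101) (hbl12_101) (by decide)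
lemma hptT_110 : ∀ y ∈ Tc, (y : Fin 15) ∈ pointOrbit (Dd true true false) 12 := by
  intro y hy
  fin_cases hy
  · exact mem_pointOrbit_self _
  · exact ⟨rho110, rho110_mem, by decide⟩
  · exact ⟨rho110 * rho110, mul_mem rho110_mem rho110_mem, by decide⟩
lemma hptU_110 : ∀ y ∈ Uc, (y : Fin 15) ∈ pointOrbit (Dd true true false) 0 := by
  intro y hy
  fin_cases hy
  · exact mem_pointOrbit_self _
  · exact ⟨w1p, w1p_mem true true false, by decide⟩
  · exact ⟨w2p, w2p_mem true true false, by decide⟩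
  · exact ⟨w3p, w3p_mem true true false, by decide⟩
  · exact ⟨rho110, rho110_mem, by decide⟩
  · exact ⟨rho110 * w3p, mul_mem (rho110_mem) (w3p_mem true true false), by decide⟩
  · exact ⟨rho110 * w1p, mul_mem (rho110_mem) (w1p_mem true true false), by decide⟩
  · exact ⟨rho110 * w2p, mul_mem (rho110_mem) (w2p_mem true true false), by decide⟩
  · exact ⟨rho110 * rho110, mul_mem (rho110_mem) (rho110_mem), by decide⟩
  · exact ⟨rho110 * rho110 * w2p, mul_mem (mul_mem (rho110_mem) (rho110_mem)) (w2p_mem true true false), by decide⟩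
  · exact ⟨rho110 * rho110 * w3p, mul_mem (mul_mem (rho110_mem) (rho110_mem)) (w3p_mem true true false), by decide⟩
  · exact ⟨rho110 * rho110 * w1p, mul_mem (mul_mem (rho110_mem) (rho110_mem)) (w1p_mem true true false), by decide⟩
lemma hbl3_110 : ∀ c ∈ ({O1c, O2c, O3c} : Finset (Finset (Fin 15))), c ∈ blockOrbit (Dd true true false) O1c := by
  intro c hc
  fin_cases hc
  · exact mem_blockOrbit_self _
  · exact ⟨rho110 * rho110, mul_mem rho110_mem rho110_mem, by decide⟩
  · exact ⟨rho110, rho110_mem, by decide⟩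
lemma hbl12_110 : ∀ c ∈ Dd true true false, ¬(c = O1c ∨ c = O2c ∨ c = O3c) → c ∈ blockOrbit (Dd true true false) ({0,1,4,5,10,11,13,14} : Finset (Fin 15)) := by
  intro c hc hnc
  rcases mem_Dd_cases hc with h | h | h | h
  · exfalso
    simp only [Cc, Finset.mem_insert, Finset.mem_singleton] at h
    exact hnc h
  · fin_cases h
    · exact mem_blockOrbit_self _
    · exact ⟨w2p * u2p, mul_mem (w2p_mem true true false) (u2p_mem true true false), by decide⟩
    · exact ⟨u2p, u2p_mem true true false, by decide⟩
    · exact ⟨w2p, w2p_mem true true false, by decide⟩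
  · fin_cases h
    · exact ⟨u1p * rho110, mul_mem (u1p_mem true true false) (rho110_mem), by decide⟩
    · exact ⟨w1p * rho110, mul_mem (w1p_mem true true false) (rho110_mem), by decide⟩
    · exact ⟨rho110, rho110_mem, by decide⟩
    · exact ⟨rho110 * w2p, mul_mem (rho110_mem) (w2p_mem true true false), by decide⟩
  · fin_cases h
    · exact ⟨w1p * rho110 * rho110, mul_mem (mul_mem (w1p_mem true true false) (rho110_mem)) (rho110_mem), by decide⟩
    · exact ⟨u1p * rho110 * rho110, mul_mem (mul_mem (u1p_mem true true false) (rho110_mem)) (rho110_mem), by decide⟩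
    · exact ⟨rho110 * w1p * rho110, mul_mem (mul_mem (rho110_mem) (w1p_mem true true false)) (rho110_mem), by decide⟩
    · exact ⟨rho110 * rho110, mul_mem (rho110_mem) (rho110_mem), by decide⟩
lemma cent_char_110 : ∀ Q, IsCenter (Dd true true false) Q → (Q = O1c ∨ Q = O2c ∨ Q = O3c) := by
  intro Q hQ
  rcases mem_Dd_cases hQ.1 with h | h | h | h
  · simp only [Cc, Finset.mem_insert, Finset.mem_singleton] at h
    exact h
  · exfalso
    fin_cases h
    · exact (by decide : symmDiff ({0,1,4,5,10,11,13,14} : Finset (Fin 15)) ({0,2,4,6,9,11,12,14} : Finset (Fin 15)) ∉ Dd true true false) (hQ.2 ({0,2,4,6,9,11,12,14} : Finset (Fin 15)) (by decide) (by decide))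
    · exact (by decide : symmDiff ({0,1,6,7,8,9,13,14} : Finset (Fin 15)) ({0,2,4,6,9,11,12,14} : Finset (Fin 15)) ∉ Dd true true false) (hQ.2 ({0,2,4,6,9,11,12,14} : Finset (Fin 15)) (by decide) (by decide))
    · exact (by decide : symmDiff ({2,3,4,5,8,9,13,14} : Finset (Fin 15)) ({0,2,4,6,9,11,12,14} : Finset (Fin 15)) ∉ Dd true true false) (hQ.2 ({0,2,4,6,9,11,12,14} : Finset (Fin 15)) (by decide) (by decide))
    · exact (by decide : symmDiff ({2,3,6,7,10,11,13,14} : Finset (Fin 15)) ({0,2,4,6,9,11,12,14} : Finset (Fin 15)) ∉ Dd true true false) (hQ.2 ({0,2,4,6,9,11,12,14} : Finset (Fin 15)) (by decide) (by decide))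
  · exfalso
    fin_cases h
    · exact (by decide : symmDiff ({0,2,4,6,9,11,12,14} : Finset (Fin 15)) ({0,1,4,5,10,11,13,14} : Finset (Fin 15)) ∉ Dd true true false) (hQ.2 ({0,1,4,5,10,11,13,14} : Finset (Fin 15)) (by decide) (by decide))
    · exact (by decide : symmDiff ({0,2,5,7,8,10,12,14} : Finset (Fin 15)) ({0,1,4,5,10,11,13,14} : Finset (Fin 15)) ∉ Dd true true false) (hQ.2 ({0,1,4,5,10,11,13,14} : Finset (Fin 15)) (by decide) (by decide))
    · exact (by decide : symmDiff ({1,3,4,6,8,10,12,14} : Finset (Fin 15)) ({0,1,4,5,10,11,13,14} : Finset (Fin 15)) ∉ Dd true true false) (hQ.2 ({0,1,4,5,10,11,13,14} : Finset (Fin 15)) (by decide) (by decide))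
    · exact (by decide : symmDiff ({1,3,5,7,9,11,12,14} : Finset (Fin 15)) ({0,1,4,5,10,11,13,14} : Finset (Fin 15)) ∉ Dd true true false) (hQ.2 ({0,1,4,5,10,11,13,14} : Finset (Fin 15)) (by decide) (by decide))
  · exfalso
    fin_cases h
    · exact (by decide : symmDiff ({0,3,4,7,8,11,12,13} : Finset (Fin 15)) ({0,1,4,5,10,11,13,14} : Finset (Fin 15)) ∉ Dd true true false) (hQ.2 ({0,1,4,5,10,11,13,14} : Finset (Fin 15)) (by decide) (by decide))
    · exact (by decide : symmDiff ({0,3,5,6,9,10,12,13} : Finset (Fin 15)) ({0,1,4,5,10,11,13,14} : Finset (Fin 15)) ∉ Dd true true false) (hQ.2 ({0,1,4,5,10,11,13,14} : Finset (Fin 15)) (by decide) (by decide))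
    · exact (by decide : symmDiff ({1,2,4,7,9,10,12,13} : Finset (Fin 15)) ({0,1,4,5,10,11,13,14} : Finset (Fin 15)) ∉ Dd true true false) (hQ.2 ({0,1,4,5,10,11,13,14} : Finset (Fin 15)) (by decide) (by decide))
    · exact (by decide : symmDiff ({1,2,5,6,8,11,12,13} : Finset (Fin 15)) ({0,1,4,5,10,11,13,14} : Finset (Fin 15)) ∉ Dd true true false) (hQ.2 ({0,1,4,5,10,11,13,14} : Finset (Fin 15)) (by decide) (by decide))
lemma hcent_110 : {O | IsCenter (Dd true true false) O} = {O1c, O2c, O3c} := by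
  ext Q
  simp only [Set.mem_setOf_eq, Set.mem_insert_iff, Set.mem_singleton_iff]
  constructor
  · exact cent_char_110 Q
  · rintro (rfl | rfl | rfl)
    exacts [isCenter_O1c true true false, isCenter_O2c true true false, isCenter_O3c true true false]
lemma good_110 :
    (∃ S₁ S₂ : Set (Fin 15),
      {S | ∃ x : Fin 15, S = pointOrbit (Dd true true false) x} = {S₁, S₂} ∧
      S₁.ncard = 3 ∧ S₂.ncard = 12) ∧
    (∃ T₁ T₂ : Set (Finset (Fin 15)),
      {T | ∃ b ∈ (Dd true true false), T = blockOrbit (Dd true true false) b} = {T₁, T₂} ∧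
      T₁.ncard = 3 ∧ T₂.ncard = 12) := by
  refine assembly (Dd true true false) ({0,1,4,5,10,11,13,14} : Finset (Fin 15)) (hcent_110) (orb0_sub (by decide)) (by decide)
    (hptT_110) (hptU_110) (hbl3_110) (hbl12_110) (by decide)
lemma isCenter_c4_001 : IsCenter (Dd false false true) ({0,1,4,5,8,9,13,14} : Finset (Fin 15)) := by
  refine ⟨by decide, ?_⟩
  intro b hb hne
  rcases mem_Dd_cases hb with h | h | h | h <;> fin_cases h <;>
    first
    | exact absurd rfl hne
    | decide
lemma bad_001 : {O | IsCenter (Dd false false true) O}.ncard ≠ 3 := by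
  intro h3
  have hsub : ↑({O1c, O2c, O3c, ({0,1,4,5,8,9,13,14} : Finset (Fin 15))} : Finset (Finset (Fin 15))) ⊆
      {O | IsCenter (Dd false false true) O} := by
    intro Q hQ
    simp only [Finset.coe_insert, Finset.coe_singleton, Set.mem_insert_iff,
      Set.mem_singleton_iff] at hQ
    rcases hQ with rfl | rfl | rfl | rfl
    exacts [isCenter_O1c false false true, isCenter_O2c false false true,
      isCenter_O3c false false true, isCenter_c4_001]
  have hle := Set.ncard_le_ncard hsub (Set.toFinite _)
  rw [Set.ncard_coe_finset, h3] at hle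
  have h4 : ({O1c, O2c, O3c, ({0,1,4,5,8,9,13,14} : Finset (Fin 15))} : Finset (Finset (Fin 15))).card = 4 := by
    decide
  omega
lemma isCenter_c4_010 : IsCenter (Dd false true false) ({0,1,4,5,8,9,13,14} : Finset (Fin 15)) := by
  refine ⟨by decide, ?_⟩
  intro b hb hne
  rcases mem_Dd_cases hb with h | h | h | h <;> fin_cases h <;>
    first
    | exact absurd rfl hne
    | decide
lemma bad_010 : {O | IsCenter (Dd false true false) O}.ncard ≠ 3 := by
  intro h3
  have hsub : ↑({O1c, O2c, O3c, ({0,1,4,5,8,9,13,14} : Finset (Fin 15))} : Finset (Finset (Fin 15))) ⊆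
      {O | IsCenter (Dd false true false) O} := by
    intro Q hQ
    simp only [Finset.coe_insert, Finset.coe_singleton, Set.mem_insert_iff,
      Set.mem_singleton_iff] at hQ
    rcases hQ with rfl | rfl | rfl | rfl
    exacts [isCenter_O1c false true false, isCenter_O2c false true false,
      isCenter_O3c false true false, isCenter_c4_010]
  have hle := Set.ncard_le_ncard hsub (Set.toFinite _)
  rw [Set.ncard_coe_finset, h3] at hle
  have h4 : ({O1c, O2c, O3c, ({0,1,4,5,8,9,13,14} : Finset (Fin 15))} : Finset (Finset (Fin 15))).card = 4 := by
    decide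
  omega
lemma isCenter_c4_100 : IsCenter (Dd true false false) ({0,1,4,5,10,11,13,14} : Finset (Fin 15)) := by
  refine ⟨by decide, ?_⟩
  intro b hb hne
  rcases mem_Dd_cases hb with h | h | h | h <;> fin_cases h <;>
    first
    | exact absurd rfl hne
    | decide
lemma bad_100 : {O | IsCenter (Dd true false false) O}.ncard ≠ 3 := by
  intro h3
  have hsub : ↑({O1c, O2c, O3c, ({0,1,4,5,10,11,13,14} : Finset (Fin 15))} : Finset (Finset (Fin 15))) ⊆
      {O | IsCenter (Dd true false false) O} := by
    intro Q hQ
    simp only [Finset.coe_insert, Finset.coe_singleton, Set.mem_insert_iff,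
      Set.mem_singleton_iff] at hQ
    rcases hQ with rfl | rfl | rfl | rfl
    exacts [isCenter_O1c true false false, isCenter_O2c true false false,
      isCenter_O3c true false false, isCenter_c4_100]
  have hle := Set.ncard_le_ncard hsub (Set.toFinite _)
  rw [Set.ncard_coe_finset, h3] at hle
  have h4 : ({O1c, O2c, O3c, ({0,1,4,5,10,11,13,14} : Finset (Fin 15))} : Finset (Finset (Fin 15))).card = 4 := by
    decide
  omega
lemma isCenter_c4_111 : IsCenter (Dd true true true) ({0,1,4,5,10,11,13,14} : Finset (Fin 15)) := by
  refine ⟨by decide, ?_⟩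
  intro b hb hne
  rcases mem_Dd_cases hb with h | h | h | h <;> fin_cases h <;>
    first
    | exact absurd rfl hne
    | decide
lemma bad_111 : {O | IsCenter (Dd true true true) O}.ncard ≠ 3 := by
  intro h3
  have hsub : ↑({O1c, O2c, O3c, ({0,1,4,5,10,11,13,14} : Finset (Fin 15))} : Finset (Finset (Fin 15))) ⊆
      {O | IsCenter (Dd true true true) O} := by
    intro Q hQ
    simp only [Finset.coe_insert, Finset.coe_singleton, Set.mem_insert_iff,
      Set.mem_singleton_iff] at hQ
    rcases hQ with rfl | rfl | rfl | rfl
    exacts [isCenter_O1c true true true, isCenter_O2c true true true,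
      isCenter_O3c true true true, isCenter_c4_111]
  have hle := Set.ncard_le_ncard hsub (Set.toFinite _)
  rw [Set.ncard_coe_finset, h3] at hle
  have h4 : ({O1c, O2c, O3c, ({0,1,4,5,10,11,13,14} : Finset (Fin 15))} : Finset (Finset (Fin 15))).card = 4 := by
    decide
  omega

section Transfer

def mapB (π : Equiv.Perm (Fin 15)) (B : Finset (Finset (Fin 15))) : Finset (Finset (Fin 15)) :=
  B.image (fun b => b.image ⇑π)

variable (π : Equiv.Perm (Fin 15)) (B : Finset (Finset (Fin 15)))

lemma mem_mapB {c : Finset (Fin 15)} : c ∈ mapB π B ↔ ∃ b ∈ B, b.image ⇑π = c :=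
  Finset.mem_image

lemma mapB_comp_eq (τ : Equiv.Perm (Fin 15)) (b : Finset (Fin 15)) :
    b.image ⇑(τ * π) = (b.image ⇑π).image ⇑τ := by
  rw [Finset.image_image]
  rfl

lemma aut_conj {τ : Equiv.Perm (Fin 15)} (hτ : τ ∈ designAut (mapB π B)) :
    π⁻¹ * τ * π ∈ designAut B := by
  rw [mem_designAut]
  intro b hb
  have h1 : b.image ⇑π ∈ mapB π B := Finset.mem_image_of_mem _ hb
  have h2 := hτ _ h1
  obtain ⟨b', hb', heq⟩ := (mem_mapB π B).mp h2
  have key : b.image ⇑(π⁻¹ * τ * π) = ((b.image ⇑π).image ⇑τ).image ⇑π⁻¹ := by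
    simp only [Finset.image_image]
    apply Finset.image_congr
    intro x _
    simp [Equiv.Perm.mul_apply]
  rw [key, ← heq, image_image_inv]
  exact hb'

lemma aut_conj' {σ : Equiv.Perm (Fin 15)} (hσ : σ ∈ designAut B) :
    π * σ * π⁻¹ ∈ designAut (mapB π B) := by
  rw [mem_designAut]
  intro c hc
  obtain ⟨b, hb, rfl⟩ := (mem_mapB π B).mp hc
  have key : (b.image ⇑π).image ⇑(π * σ * π⁻¹) = (b.image ⇑σ).image ⇑π := by
    simp only [Finset.image_image]
    apply Finset.image_congr
    intro x _
    simp [Equiv.Perm.mul_apply]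
  rw [key]
  exact Finset.mem_image_of_mem _ (hσ _ hb)

lemma image_inv_image_set (s : Set (Fin 15)) : ⇑π⁻¹ '' (⇑π '' s) = s := by
  rw [Set.image_image]
  have : (fun x => π⁻¹ (π x)) = id := by funext x; simp
  rw [this, Set.image_id]

lemma pointOrbit_map (x : Fin 15) :
    pointOrbit (mapB π B) (π x) = ⇑π '' pointOrbit B x := by
  ext y
  constructor
  · rintro ⟨τ, hτ, rfl⟩
    refine ⟨(π⁻¹ * τ * π) x, ⟨π⁻¹ * τ * π, aut_conj π B hτ, rfl⟩, ?_⟩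
    simp [Equiv.Perm.mul_apply]
  · rintro ⟨y, ⟨σ, hσ, rfl⟩, rfl⟩
    exact ⟨π * σ * π⁻¹, aut_conj' π B hσ, by simp [Equiv.Perm.mul_apply]⟩

lemma blockOrbit_map (b : Finset (Fin 15)) :
    blockOrbit (mapB π B) (b.image ⇑π) = (fun c => c.image ⇑π) '' blockOrbit B b := by
  ext c
  constructor
  · rintro ⟨τ, hτ, rfl⟩
    refine ⟨b.image ⇑(π⁻¹ * τ * π), ⟨π⁻¹ * τ * π, aut_conj π B hτ, rfl⟩, ?_⟩
    simp only [Finset.image_image]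
    apply Finset.image_congr
    intro x _
    simp [Equiv.Perm.mul_apply]
  · rintro ⟨c, ⟨σ, hσ, rfl⟩, rfl⟩
    refine ⟨π * σ * π⁻¹, aut_conj' π B hσ, ?_⟩
    simp only [Finset.image_image]
    apply Finset.image_congr
    intro x _
    simp [Equiv.Perm.mul_apply]

lemma isCenter_map {O : Finset (Fin 15)} :
    IsCenter (mapB π B) (O.image ⇑π) ↔ IsCenter B O := by
  constructor
  · rintro ⟨hmem, hsd⟩
    obtain ⟨O', hO', heq⟩ := (mem_mapB π B).mp hmem
    have hOO : O' = O := Finset.image_injective π.injective heq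
    subst hOO
    refine ⟨hO', ?_⟩
    intro b hb hne
    have h1 : b.image ⇑π ∈ mapB π B := Finset.mem_image_of_mem _ hb
    have h2 : b.image ⇑π ≠ O'.image ⇑π := fun h => hne (Finset.image_injective π.injective h)
    have h3 := hsd _ h1 h2
    rw [← image_symmDiff'] at h3
    obtain ⟨c, hc, hceq⟩ := (mem_mapB π B).mp h3
    have := Finset.image_injective π.injective hceq
    rwa [← this]
  · rintro ⟨hmem, hsd⟩
    refine ⟨Finset.mem_image_of_mem _ hmem, ?_⟩
    intro c hc hne
    obtain ⟨b, hb, rfl⟩ := (mem_mapB π B).mp hc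
    have hne' : b ≠ O := fun h => hne (by rw [h])
    have h1 := hsd b hb hne'
    rw [← image_symmDiff']
    exact Finset.mem_image_of_mem _ h1

lemma centers_map :
    {O | IsCenter (mapB π B) O} = (fun O => O.image ⇑π) '' {O | IsCenter B O} := by
  ext O
  constructor
  · intro hO
    obtain ⟨b, hb, heq⟩ := (mem_mapB π B).mp hO.1
    subst heq
    exact ⟨b, (isCenter_map π B).mp hO, rfl⟩
  · rintro ⟨b, hb, rfl⟩
    exact (isCenter_map π B).mpr hb

lemma ncard_centers_map :
    {O | IsCenter (mapB π B) O}.ncard = {O | IsCenter B O}.ncard := by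
  rw [centers_map]
  exact Set.ncard_image_of_injective _ (Finset.image_injective π.injective)

lemma concl_map
    (h : (∃ S₁ S₂ : Set (Fin 15),
      {S | ∃ x : Fin 15, S = pointOrbit (mapB π B) x} = {S₁, S₂} ∧
      S₁.ncard = 3 ∧ S₂.ncard = 12) ∧
    (∃ T₁ T₂ : Set (Finset (Fin 15)),
      {T | ∃ b ∈ mapB π B, T = blockOrbit (mapB π B) b} = {T₁, T₂} ∧
      T₁.ncard = 3 ∧ T₂.ncard = 12)) :
    (∃ S₁ S₂ : Set (Fin 15),
      {S | ∃ x : Fin 15, S = pointOrbit B x} = {S₁, S₂} ∧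
      S₁.ncard = 3 ∧ S₂.ncard = 12) ∧
    (∃ T₁ T₂ : Set (Finset (Fin 15)),
      {T | ∃ b ∈ B, T = blockOrbit B b} = {T₁, T₂} ∧
      T₁.ncard = 3 ∧ T₂.ncard = 12) := by
  obtain ⟨⟨S₁, S₂, hS, h3, h12⟩, ⟨T₁, T₂, hT, ht3, ht12⟩⟩ := h
  constructor
  · refine ⟨⇑π⁻¹ '' S₁, ⇑π⁻¹ '' S₂, ?_, ?_, ?_⟩
    · ext S
      simp only [Set.mem_setOf_eq, Set.mem_insert_iff, Set.mem_singleton_iff]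
      constructor
      · rintro ⟨x, rfl⟩
        have hx := pointOrbit_map π B x
        have hmem : pointOrbit (mapB π B) (π x) ∈ ({S₁, S₂} : Set (Set (Fin 15))) := by
          rw [← hS]; exact ⟨π x, rfl⟩
        rcases hmem with hh | hh
        · left; rw [← hh, hx, image_inv_image_set]
        · right
          rw [Set.mem_singleton_iff] at hh
          rw [← hh, hx, image_inv_image_set]
      · have key : ∀ W : Set (Fin 15), (∃ y, W = pointOrbit (mapB π B) y) →
            ∃ x, ⇑π⁻¹ '' W = pointOrbit B x := by
          rintro W ⟨y, rfl⟩
          refine ⟨π⁻¹ y, ?_⟩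
          have := pointOrbit_map π B (π⁻¹ y)
          rw [show π (π⁻¹ y) = y by simp] at this
          rw [this, image_inv_image_set]
        rintro (rfl | rfl)
        · refine key S₁ ?_
          have : S₁ ∈ {S | ∃ x, S = pointOrbit (mapB π B) x} := by rw [hS]; left; rfl
          exact this
        · refine key S₂ ?_
          have : S₂ ∈ {S | ∃ x, S = pointOrbit (mapB π B) x} := by rw [hS]; right; rfl
          exact this
    · rw [Set.ncard_image_of_injective _ (Equiv.injective _)]; exact h3
    · rw [Set.ncard_image_of_injective _ (Equiv.injective _)]; exact h12
  · refine ⟨(fun c => c.image ⇑π⁻¹) '' T₁, (fun c => c.image ⇑π⁻¹) '' T₂, ?_, ?_, ?_⟩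
    · have invinv : ∀ W : Set (Finset (Fin 15)),
          (fun c => c.image ⇑π⁻¹) '' ((fun c => c.image ⇑π) '' W) = W := by
        intro W
        rw [Set.image_image]
        have : (fun c : Finset (Fin 15) => (c.image ⇑π).image ⇑π⁻¹) = id := by
          funext c; exact image_image_inv c
        rw [this, Set.image_id]
      ext S
      simp only [Set.mem_setOf_eq, Set.mem_insert_iff, Set.mem_singleton_iff]
      constructor
      · rintro ⟨b, hb, rfl⟩
        have hx := blockOrbit_map π B b
        have hmem : blockOrbit (mapB π B) (b.image ⇑π) ∈ ({T₁, T₂} : Set (Set (Finset (Fin 15)))) := by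
          rw [← hT]
          exact ⟨b.image ⇑π, Finset.mem_image_of_mem _ hb, rfl⟩
        rcases hmem with hh | hh
        · left; rw [← hh, hx, invinv]
        · right
          rw [Set.mem_singleton_iff] at hh
          rw [← hh, hx, invinv]
      · have key : ∀ W : Set (Finset (Fin 15)), (∃ c ∈ mapB π B, W = blockOrbit (mapB π B) c) →
            ∃ b ∈ B, (fun c => c.image ⇑π⁻¹) '' W = blockOrbit B b := by
          rintro W ⟨c, hc, rfl⟩
          obtain ⟨b, hb, rfl⟩ := (mem_mapB π B).mp hc
          refine ⟨b, hb, ?_⟩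
          rw [blockOrbit_map π B b, invinv]
        rintro (rfl | rfl)
        · refine key T₁ ?_
          have : T₁ ∈ {T | ∃ b ∈ mapB π B, T = blockOrbit (mapB π B) b} := by rw [hT]; left; rfl
          exact this
        · refine key T₂ ?_
          have : T₂ ∈ {T | ∃ b ∈ mapB π B, T = blockOrbit (mapB π B) b} := by rw [hT]; right; rfl
          exact this
    · rw [Set.ncard_image_of_injective _ (Finset.image_injective (Equiv.injective _))]; exact ht3
    · rw [Set.ncard_image_of_injective _ (Finset.image_injective (Equiv.injective _))]; exact ht12

end Transfer

section Structure

variable {B : Finset (Finset (Fin 15))}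

lemma center_symmDiff {O O' : Finset (Fin 15)} (hO : IsCenter B O) (hO' : IsCenter B O')
    (hne : O ≠ O') : IsCenter B (symmDiff O O') := by
  refine ⟨hO.2 O' hO'.1 (Ne.symm hne), ?_⟩
  intro b hb hbne
  by_cases hbO' : b = O'
  · subst hbO'
    rw [symmDiff_assoc, symmDiff_self, symmDiff_bot]
    exact hO.1
  · have h1 : symmDiff O' b ∈ B := hO'.2 b hb hbO'
    have h2 : symmDiff O' b ≠ O := by
      intro h
      apply hbne
      calc b = symmDiff O' (symmDiff O' b) := (symmDiff_symmDiff_cancel_left O' b).symm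
        _ = symmDiff O' O := by rw [h]
        _ = symmDiff O O' := symmDiff_comm O' O
    have h3 := hO.2 _ h1 h2
    rwa [← symmDiff_assoc] at h3

lemma pair_inter_card {T p q : Finset (Fin 15)} (hT : T.card = 3) (hp : p ⊆ T) (hq : q ⊆ T)
    (hpc : p.card = 2) (hqc : q.card = 2) (hne : p ≠ q) : (p ∩ q).card = 1 := by
  have h1 : (p ∪ q).card ≤ 3 := hT ▸ Finset.card_le_card (Finset.union_subset hp hq)
  have h2 : (p ∪ q).card + (p ∩ q).card = p.card + q.card := Finset.card_union_add_card_inter p q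
  have h3 : (p ∩ q).card ≤ 2 := hpc ▸ Finset.card_le_card Finset.inter_subset_left
  have h4 : (p ∩ q).card = 2 → p = q := by
    intro h
    have hp' : p ∩ q = p :=
      Finset.eq_of_subset_of_card_le Finset.inter_subset_left (by omega)
    have hq' : p ∩ q = q :=
      Finset.eq_of_subset_of_card_le Finset.inter_subset_right (by omega)
    rw [← hp', hq']
  have : (p ∩ q).card ≠ 2 := fun h => hne (h4 h)
  omega

lemma inter3_sd_sub {O b c A : Finset (Fin 15)} (hA : A ⊆ O) :
    ((symmDiff O b) ∩ c) ∩ A = (c ∩ A) \ b := by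
  ext x
  have hAx : x ∈ A → x ∈ O := fun h => hA h
  simp only [Finset.mem_inter, Finset.mem_sdiff, Finset.mem_symmDiff]
  tauto

lemma inter3_sd_disj {O b c A : Finset (Fin 15)} (hA : ∀ x ∈ A, x ∉ O) :
    ((symmDiff O b) ∩ c) ∩ A = (b ∩ c) ∩ A := by
  ext x
  have hAx : x ∈ A → x ∉ O := hA x
  simp only [Finset.mem_inter, Finset.mem_symmDiff]
  tauto

lemma inter_sd_disj {O b A : Finset (Fin 15)} (hA : ∀ x ∈ A, x ∉ O) :
    (symmDiff O b) ∩ A = b ∩ A := by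
  ext x
  have hAx : x ∈ A → x ∉ O := hA x
  simp only [Finset.mem_inter, Finset.mem_symmDiff]
  tauto

lemma part_label {A x1 x2 x3 : Finset (Fin 15)} (hA : A.card = 4)
    (h1 : x1 ⊆ A) (h2 : x2 ⊆ A) (h3 : x3 ⊆ A)
    (hx1 : x1.card = 2) (hx2 : x2.card = 2) (hx3 : x3.card = 2)
    (h12 : (x1 ∩ x2).card = 1) (h13 : (x1 ∩ x3).card = 1) (h23 : (x2 ∩ x3).card = 1) :
    ∃ a q1 q2 q3 : Fin 15, A = {a, q1, q2, q3} ∧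
      (a ≠ q1 ∧ a ≠ q2 ∧ a ≠ q3 ∧ q1 ≠ q2 ∧ q1 ≠ q3 ∧ q2 ≠ q3) ∧
      (x1 = {a, q1} ∨ x1 = A \ {a, q1}) ∧
      (x2 = {a, q2} ∨ x2 = A \ {a, q2}) ∧
      (x3 = {a, q3} ∨ x3 = A \ {a, q3}) := by
  have hA0 : A.Nonempty := by rw [← Finset.card_pos, hA]; norm_num
  obtain ⟨a, ha⟩ := hA0
  have get : ∀ x : Finset (Fin 15), x ⊆ A → x.card = 2 →
      ∃ q, q ≠ a ∧ q ∈ A ∧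
        ((a ∈ x ∧ x = {a, q}) ∨ (a ∉ x ∧ A \ x = {a, q})) := by
    intro x hxA hxc
    by_cases hax : a ∈ x
    · obtain ⟨u, v, huv, hx⟩ := Finset.card_eq_two.mp hxc
      subst hx
      rcases Finset.mem_insert.mp hax with rfl | hv
      · exact ⟨v, fun h => huv h.symm, hxA (by simp), Or.inl ⟨hax, rfl⟩⟩
      · rw [Finset.mem_singleton] at hv
        subst hv
        exact ⟨u, fun h => huv h, hxA (by simp), Or.inl ⟨hax, Finset.pair_comm u a⟩⟩
    · have hyc : (A \ x).card = 2 := by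
        rw [Finset.card_sdiff_of_subset hxA, hA, hxc]
      have hay : a ∈ A \ x := Finset.mem_sdiff.mpr ⟨ha, hax⟩
      obtain ⟨u, v, huv, hy⟩ := Finset.card_eq_two.mp hyc
      rw [hy] at hay
      rcases Finset.mem_insert.mp hay with rfl | hv
      · refine ⟨v, fun h => huv h.symm, ?_, Or.inr ⟨hax, hy⟩⟩
        have : v ∈ A \ x := by rw [hy]; simp
        exact (Finset.mem_sdiff.mp this).1
      · rw [Finset.mem_singleton] at hv
        subst hv
        refine ⟨u, fun h => huv h, ?_, Or.inr ⟨hax, hy.trans (Finset.pair_comm u a)⟩⟩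
        have : u ∈ A \ x := by rw [hy]; simp
        exact (Finset.mem_sdiff.mp this).1
  obtain ⟨q1, hq1a, hq1A, hs1⟩ := get x1 h1 hx1
  obtain ⟨q2, hq2a, hq2A, hs2⟩ := get x2 h2 hx2
  obtain ⟨q3, hq3a, hq3A, hs3⟩ := get x3 h3 hx3
  have key : ∀ x y : Finset (Fin 15), ∀ qx : Fin 15, x.card = 2 → x ⊆ A → y ⊆ A →
      (x ∩ y).card = 1 →
      ((a ∈ x ∧ x = {a, qx}) ∨ (a ∉ x ∧ A \ x = {a, qx})) →
      ((a ∈ y ∧ y = {a, qx}) ∨ (a ∉ y ∧ A \ y = {a, qx})) →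
      False := by
    rintro x y qx hxc hxA hyA hxy (⟨hax, hx⟩ | ⟨hax, hx⟩) (⟨hay, hy⟩ | ⟨hay, hy⟩)
    · have hxy2 : x = y := hx.trans hy.symm
      rw [hxy2, Finset.inter_self] at hxy
      have : y.card = 2 := hxy2 ▸ hxc
      omega
    · have hy2 : y = A \ {a, qx} := by rw [← hy, Finset.sdiff_sdiff_eq_self hyA]
      have hz : x ∩ y = ∅ := by rw [hx, hy2]; exact Finset.inter_sdiff_self _ _
      rw [hz] at hxy
      simp at hxy
    · have hx2 : x = A \ {a, qx} := by rw [← hx, Finset.sdiff_sdiff_eq_self hxA]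
      have hz : x ∩ y = ∅ := by
        rw [hx2, hy, Finset.inter_comm]
        exact Finset.inter_sdiff_self _ _
      rw [hz] at hxy
      simp at hxy
    · have hx2 : x = A \ {a, qx} := by rw [← hx, Finset.sdiff_sdiff_eq_self hxA]
      have hy2 : y = A \ {a, qx} := by rw [← hy, Finset.sdiff_sdiff_eq_self hyA]
      have hxy2 : x = y := hx2.trans hy2.symm
      rw [hxy2, Finset.inter_self] at hxy
      have : y.card = 2 := hxy2 ▸ hxc
      omega
  have hq12 : q1 ≠ q2 := by
    intro h
    exact key x1 x2 q1 hx1 h1 h2 h12 hs1 (h ▸ hs2)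
  have hq13 : q1 ≠ q3 := by
    intro h
    exact key x1 x3 q1 hx1 h1 h3 h13 hs1 (h ▸ hs3)
  have hq23 : q2 ≠ q3 := by
    intro h
    exact key x2 x3 q2 hx2 h2 h3 h23 hs2 (h ▸ hs3)
  have hsub : ({a, q1, q2, q3} : Finset (Fin 15)) ⊆ A := by
    intro z hz
    simp only [Finset.mem_insert, Finset.mem_singleton] at hz
    rcases hz with rfl | rfl | rfl | rfl
    exacts [ha, hq1A, hq2A, hq3A]
  have hc4 : ({a, q1, q2, q3} : Finset (Fin 15)).card = 4 := by
    rw [Finset.card_insert_of_notMem (by simp [Ne.symm hq1a, Ne.symm hq2a, Ne.symm hq3a,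
        (fun h => hq1a h.symm : a ≠ q1), (fun h => hq2a h.symm : a ≠ q2),
        (fun h => hq3a h.symm : a ≠ q3)]),
      Finset.card_insert_of_notMem (by simp [hq12, hq13]),
      Finset.card_insert_of_notMem (by simp [hq23]), Finset.card_singleton]
  have hAeq : A = {a, q1, q2, q3} :=
    (Finset.eq_of_subset_of_card_le hsub (by rw [hA, hc4])).symm
  have form : ∀ x : Finset (Fin 15), ∀ qx : Fin 15, x ⊆ A →
      ((a ∈ x ∧ x = {a, qx}) ∨ (a ∉ x ∧ A \ x = {a, qx})) →
      (x = {a, qx} ∨ x = A \ {a, qx}) := by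
    rintro x qx hxA (⟨_, hx⟩ | ⟨_, hx⟩)
    · exact Or.inl hx
    · right
      rw [← hx, Finset.sdiff_sdiff_eq_self hxA]
  exact ⟨a, q1, q2, q3, hAeq,
    ⟨fun h => hq1a h.symm, fun h => hq2a h.symm, fun h => hq3a h.symm, hq12, hq13, hq23⟩,
    form x1 q1 h1 hs1, form x2 q2 h2 hs2, form x3 q3 h3 hs3⟩


lemma orb0_quad : ∀ e : Bool, ∀ c ∈ orb0 e,
    ({c, symmDiff O1c c, symmDiff O2c c, symmDiff O3c c} : Finset (Finset (Fin 15))) = orb0 e := by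
  intro e c hc
  cases e <;> fin_cases hc <;> decide

lemma orb1_quad : ∀ e : Bool, ∀ c ∈ orb1 e,
    ({c, symmDiff O1c c, symmDiff O2c c, symmDiff O3c c} : Finset (Finset (Fin 15))) = orb1 e := by
  intro e c hc
  cases e <;> fin_cases hc <;> decide

lemma orb2_quad : ∀ e : Bool, ∀ c ∈ orb2 e,
    ({c, symmDiff O1c c, symmDiff O2c c, symmDiff O3c c} : Finset (Finset (Fin 15))) = orb2 e := by
  intro e c hc
  cases e <;> fin_cases hc <;> decide

set_option maxHeartbeats 4000000 in
set_option maxRecDepth 8000 in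
theorem structureMain (B : Finset (Finset (Fin 15))) (hD : IsDesign B)
    (hC2 : {O | IsCenter B O}.ncard = 3) :
    ∃ (π : Equiv.Perm (Fin 15)) (e1 e2 e3 : Bool), mapB π B = Dd e1 e2 e3 := by
  obtain ⟨hcard15, hsize, hint⟩ := hD
  obtain ⟨c1, c2, c3, h12, h13, h23, hcset⟩ := Set.ncard_eq_three.mp hC2
  rw [Set.ext_iff] at hcset
  have hcen : ∀ O, IsCenter B O ↔ (O = c1 ∨ O = c2 ∨ O = c3) := by
    intro O
    have := hcset O
    simpa using this
  have hc1 : IsCenter B c1 := (hcen c1).mpr (Or.inl rfl)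
  have hc2 : IsCenter B c2 := (hcen c2).mpr (Or.inr (Or.inl rfl))
  have hc3 : IsCenter B c3 := (hcen c3).mpr (Or.inr (Or.inr rfl))
  have hO3 : c3 = symmDiff c1 c2 := by
    have hc12 : IsCenter B (symmDiff c1 c2) := center_symmDiff hc1 hc2 h12
    rcases (hcen _).mp hc12 with h | h | h
    · exfalso
      have h2e : c2 = ⊥ := symmDiff_eq_left.mp h
      have := hsize c2 hc2.1
      rw [h2e] at this
      simp at this
    · exfalso
      have h1e : c1 = ⊥ := symmDiff_eq_right.mp h
      have := hsize c1 hc1.1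
      rw [h1e] at this
      simp at this
    · exact h.symm
  set A1 := c1 ∩ c2 with hA1def
  set A2 := c1 ∩ c3 with hA2def
  set A3 := c2 ∩ c3 with hA3def
  set T := Finset.univ \ (c1 ∪ c2) with hTdef
  have hm3 : ∀ x, x ∈ c3 ↔ ((x ∈ c1 ∧ x ∉ c2) ∨ (x ∈ c2 ∧ x ∉ c1)) := by
    intro x
    rw [hO3]
    exact Finset.mem_symmDiff
  have hc1U : c1 = A1 ∪ A2 := by
    ext x
    simp only [hA1def, hA2def, Finset.mem_union, Finset.mem_inter, hm3 x]
    tauto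
  have hc2U : c2 = A1 ∪ A3 := by
    ext x
    simp only [hA1def, hA3def, Finset.mem_union, Finset.mem_inter, hm3 x]
    tauto
  have hc3U : c3 = A2 ∪ A3 := by
    ext x
    simp only [hA2def, hA3def, Finset.mem_union, Finset.mem_inter, hm3 x]
    tauto
  have huniv : ∀ x : Fin 15, x ∈ A1 ∨ x ∈ A2 ∨ x ∈ A3 ∨ x ∈ T := by
    intro x
    simp only [hA1def, hA2def, hA3def, hTdef, Finset.mem_sdiff, Finset.mem_union,
      Finset.mem_inter, Finset.mem_univ, true_and, hm3 x]
    tauto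
  have hTnc : ∀ x ∈ T, x ∉ c1 ∧ x ∉ c2 ∧ x ∉ c3 := by
    intro x hx
    simp only [hTdef, Finset.mem_sdiff, Finset.mem_union, Finset.mem_univ, true_and] at hx
    rw [hm3 x]
    tauto
  have d12 : Disjoint A1 A2 := by
    rw [Finset.disjoint_left]
    intro x hx1 hx2
    simp only [hA1def, hA2def, Finset.mem_inter] at hx1 hx2
    have := (hm3 x).mp hx2.2
    tauto
  have d13 : Disjoint A1 A3 := by
    rw [Finset.disjoint_left]
    intro x hx1 hx2
    simp only [hA1def, hA3def, Finset.mem_inter] at hx1 hx2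
    have := (hm3 x).mp hx2.2
    tauto
  have d23 : Disjoint A2 A3 := by
    rw [Finset.disjoint_left]
    intro x hx1 hx2
    simp only [hA2def, hA3def, Finset.mem_inter] at hx1 hx2
    have := (hm3 x).mp hx1.2
    tauto
  have dT : ∀ x ∈ T, x ∉ A1 ∧ x ∉ A2 ∧ x ∉ A3 := by
    intro x hx
    obtain ⟨n1, n2, n3⟩ := hTnc x hx
    simp only [hA1def, hA2def, hA3def, Finset.mem_inter]
    tauto
  have hcard4 : ∀ s : Finset (Fin 15),
      s.card = (s ∩ A1).card + (s ∩ A2).card + (s ∩ A3).card + (s ∩ T).card := by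
    intro s
    have hdecomp : s = ((s ∩ A1) ∪ (s ∩ A2) ∪ (s ∩ A3)) ∪ (s ∩ T) := by
      ext x
      simp only [Finset.mem_union, Finset.mem_inter]
      constructor
      · intro hx
        rcases huniv x with h | h | h | h <;> tauto
      · tauto
    have e1 : Disjoint (s ∩ A1) (s ∩ A2) :=
      d12.mono Finset.inter_subset_right Finset.inter_subset_right
    have e2 : Disjoint ((s ∩ A1) ∪ (s ∩ A2)) (s ∩ A3) := by
      rw [Finset.disjoint_union_left]
      exact ⟨d13.mono Finset.inter_subset_right Finset.inter_subset_right,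
        d23.mono Finset.inter_subset_right Finset.inter_subset_right⟩
    have e3 : Disjoint ((s ∩ A1) ∪ (s ∩ A2) ∪ (s ∩ A3)) (s ∩ T) := by
      rw [Finset.disjoint_left]
      intro x hx hxT
      have hxT' := (dT x (Finset.mem_inter.mp hxT).2)
      simp only [Finset.mem_union, Finset.mem_inter] at hx
      tauto
    calc s.card = (((s ∩ A1) ∪ (s ∩ A2) ∪ (s ∩ A3)) ∪ (s ∩ T)).card := by rw [← hdecomp]
      _ = ((s ∩ A1) ∪ (s ∩ A2) ∪ (s ∩ A3)).card + (s ∩ T).card :=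
          Finset.card_union_of_disjoint e3
      _ = ((s ∩ A1) ∪ (s ∩ A2)).card + (s ∩ A3).card + (s ∩ T).card := by
          rw [Finset.card_union_of_disjoint e2]
      _ = (s ∩ A1).card + (s ∩ A2).card + (s ∩ A3).card + (s ∩ T).card := by
          rw [Finset.card_union_of_disjoint e1]
  
  have hA1c : A1.card = 4 := hint c1 hc1.1 c2 hc2.1 h12
  have hA2c : A2.card = 4 := hint c1 hc1.1 c3 hc3.1 h13
  have hA3c : A3.card = 4 := hint c2 hc2.1 c3 hc3.1 h23
  have hc1c : c1.card = 8 := hsize _ hc1.1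
  have hc2c : c2.card = 8 := hsize _ hc2.1
  have hTc : T.card = 3 := by
    have h1 : (c1 ∪ c2).card + (c1 ∩ c2).card = c1.card + c2.card :=
      Finset.card_union_add_card_inter _ _
    rw [← hA1def] at h1
    have h2 : T.card = (Finset.univ : Finset (Fin 15)).card - (c1 ∪ c2).card := by
      rw [hTdef]
      exact Finset.card_sdiff_of_subset (Finset.subset_univ _)
    have h3 : (Finset.univ : Finset (Fin 15)).card = 15 := by simp
    omega
  have htrace : ∀ b ∈ B, b ≠ c1 → b ≠ c2 → b ≠ c3 →
      (b ∩ A1).card = 2 ∧ (b ∩ A2).card = 2 ∧ (b ∩ A3).card = 2 ∧ (b ∩ T).card = 2 := by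
    intro b hb hn1 hn2 hn3
    have e0 := hcard4 b
    have hbc : b.card = 8 := hsize b hb
    have i1 : (b ∩ c1).card = 4 := hint b hb c1 hc1.1 hn1
    have i2 : (b ∩ c2).card = 4 := hint b hb c2 hc2.1 hn2
    have i3 : (b ∩ c3).card = 4 := hint b hb c3 hc3.1 hn3
    have s1 : (b ∩ c1).card = (b ∩ A1).card + (b ∩ A2).card := by
      rw [hc1U, Finset.inter_union_distrib_left]
      exact Finset.card_union_of_disjoint
        (d12.mono Finset.inter_subset_right Finset.inter_subset_right)
    have s2 : (b ∩ c2).card = (b ∩ A1).card + (b ∩ A3).card := by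
      rw [hc2U, Finset.inter_union_distrib_left]
      exact Finset.card_union_of_disjoint
        (d13.mono Finset.inter_subset_right Finset.inter_subset_right)
    have s3 : (b ∩ c3).card = (b ∩ A2).card + (b ∩ A3).card := by
      rw [hc3U, Finset.inter_union_distrib_left]
      exact Finset.card_union_of_disjoint
        (d23.mono Finset.inter_subset_right Finset.inter_subset_right)
    omega
  have hsd12 : symmDiff c1 c2 = c3 := hO3.symm
  have hsd21 : symmDiff c2 c1 = c3 := by rw [symmDiff_comm]; exact hO3.symm
  have hsd13 : symmDiff c1 c3 = c2 := by rw [hO3]; exact symmDiff_symmDiff_cancel_left c1 c2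
  have hsd31 : symmDiff c3 c1 = c2 := by rw [symmDiff_comm]; exact hsd13
  have hsd23 : symmDiff c2 c3 = c1 := by
    rw [hO3, symmDiff_comm c1 c2]
    exact symmDiff_symmDiff_cancel_left c2 c1
  have hsd32 : symmDiff c3 c2 = c1 := by rw [symmDiff_comm]; exact hsd23
  have hclose : ∀ b ∈ B, b ≠ c1 → b ≠ c2 → b ≠ c3 → ∀ O, (O = c1 ∨ O = c2 ∨ O = c3) →
      (symmDiff O b ∈ B ∧ symmDiff O b ≠ c1 ∧ symmDiff O b ≠ c2 ∧ symmDiff O b ≠ c3) := by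
    intro b hb hn1 hn2 hn3 O hO
    have hObne : b ≠ O := by rcases hO with rfl | rfl | rfl <;> assumption
    have hOc : IsCenter B O := (hcen O).mpr hO
    have hmem : symmDiff O b ∈ B := hOc.2 b hb hObne
    have hbne : b ≠ (⊥ : Finset (Fin 15)) := by
      intro h
      have := hsize b hb
      rw [h] at this
      simp at this
    have hkey : ∀ cj : Finset (Fin 15), symmDiff O cj ≠ b → symmDiff O b ≠ cj := by
      intro cj hne heq
      apply hne
      rw [← heq, symmDiff_symmDiff_cancel_left]
    refine ⟨hmem, hkey c1 ?_, hkey c2 ?_, hkey c3 ?_⟩ <;> rcases hO with rfl | rfl | rfl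
    · rw [symmDiff_self]; exact Ne.symm hbne
    · rw [hsd21]; exact Ne.symm hn3
    · rw [hsd31]; exact Ne.symm hn2
    · rw [hsd12]; exact Ne.symm hn3
    · rw [symmDiff_self]; exact Ne.symm hbne
    · rw [hsd32]; exact Ne.symm hn1
    · rw [hsd13]; exact Ne.symm hn2
    · rw [hsd23]; exact Ne.symm hn1
    · rw [symmDiff_self]; exact Ne.symm hbne
  
  have hA1s1 : A1 ⊆ c1 := Finset.inter_subset_left
  have hA1s2 : A1 ⊆ c2 := Finset.inter_subset_right
  have hA2s1 : A2 ⊆ c1 := Finset.inter_subset_left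
  have hA2s3 : A2 ⊆ c3 := Finset.inter_subset_right
  have hA3s2 : A3 ⊆ c2 := Finset.inter_subset_left
  have hA3s3 : A3 ⊆ c3 := Finset.inter_subset_right
  have hA1n3 : ∀ x ∈ A1, x ∉ c3 := by
    intro x hx
    rw [hm3 x]
    simp only [hA1def, Finset.mem_inter] at hx
    tauto
  have hA2n2 : ∀ x ∈ A2, x ∉ c2 := by
    intro x hx
    simp only [hA2def, Finset.mem_inter] at hx
    have := (hm3 x).mp hx.2
    tauto
  have hA3n1 : ∀ x ∈ A3, x ∉ c1 := by
    intro x hx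
    simp only [hA3def, Finset.mem_inter] at hx
    have := (hm3 x).mp hx.2
    tauto
  have hTd1 : ∀ x ∈ T, x ∉ c1 := fun x hx => (hTnc x hx).1
  have hTd2 : ∀ x ∈ T, x ∉ c2 := fun x hx => (hTnc x hx).2.1
  have hTd3 : ∀ x ∈ T, x ∉ c3 := fun x hx => (hTnc x hx).2.2
  have keyE : ∀ b ∈ B, b ≠ c1 → b ≠ c2 → b ≠ c3 → ∀ c ∈ B, c ≠ c1 → c ≠ c2 → c ≠ c3 →
      c ≠ b → c ≠ symmDiff c1 b → c ≠ symmDiff c2 b → c ≠ symmDiff c3 b →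
      ((b ∩ c ∩ A1).card = 1 ∧ (b ∩ c ∩ A2).card = 1 ∧ (b ∩ c ∩ A3).card = 1 ∧
        b ∩ T ≠ c ∩ T) := by
    intro b hb hb1 hb2 hb3 c hc hcn1 hcn2 hcn3 hne hs1 hs2 hs3
    obtain ⟨tb1, tb2, tb3, tbT⟩ := htrace b hb hb1 hb2 hb3
    obtain ⟨tc1, tc2, tc3, tcT⟩ := htrace c hc hcn1 hcn2 hcn3
    have eq0 : (b ∩ c).card = 4 := hint b hb c hc (Ne.symm hne)
    have sp0 := hcard4 (b ∩ c)
    obtain ⟨m1, _, _, _⟩ := hclose b hb hb1 hb2 hb3 c1 (Or.inl rfl)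
    obtain ⟨m2, _, _, _⟩ := hclose b hb hb1 hb2 hb3 c2 (Or.inr (Or.inl rfl))
    obtain ⟨m3, _, _, _⟩ := hclose b hb hb1 hb2 hb3 c3 (Or.inr (Or.inr rfl))
    have eqi1 : (symmDiff c1 b ∩ c).card = 4 := hint _ m1 c hc (Ne.symm hs1)
    have eqi2 : (symmDiff c2 b ∩ c).card = 4 := hint _ m2 c hc (Ne.symm hs2)
    have eqi3 : (symmDiff c3 b ∩ c).card = 4 := hint _ m3 c hc (Ne.symm hs3)
    have comm3 : ∀ X : Finset (Fin 15), (c ∩ X) ∩ b = b ∩ c ∩ X := by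
      intro X
      ext x
      simp only [Finset.mem_inter]
      tauto
    have f1 : ((c ∩ A1) \ b).card + (b ∩ c ∩ A1).card = 2 := by
      conv_lhs => rw [← comm3 A1]
      rw [Finset.card_sdiff_add_card_inter]
      exact tc1
    have f2 : ((c ∩ A2) \ b).card + (b ∩ c ∩ A2).card = 2 := by
      conv_lhs => rw [← comm3 A2]
      rw [Finset.card_sdiff_add_card_inter]
      exact tc2
    have f3 : ((c ∩ A3) \ b).card + (b ∩ c ∩ A3).card = 2 := by
      conv_lhs => rw [← comm3 A3]
      rw [Finset.card_sdiff_add_card_inter]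
      exact tc3
    have g1 : ((c ∩ A1) \ b).card + ((c ∩ A2) \ b).card + (b ∩ c ∩ A3).card
        + (b ∩ c ∩ T).card = 4 := by
      have hh := hcard4 (symmDiff c1 b ∩ c)
      rw [inter3_sd_sub hA1s1, inter3_sd_sub hA2s1, inter3_sd_disj hA3n1,
        inter3_sd_disj hTd1, eqi1] at hh
      omega
    have g2 : ((c ∩ A1) \ b).card + (b ∩ c ∩ A2).card + ((c ∩ A3) \ b).card
        + (b ∩ c ∩ T).card = 4 := by
      have hh := hcard4 (symmDiff c2 b ∩ c)
      rw [inter3_sd_sub hA1s2, inter3_sd_disj hA2n2, inter3_sd_sub hA3s2,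
        inter3_sd_disj hTd2, eqi2] at hh
      omega
    have g3 : (b ∩ c ∩ A1).card + ((c ∩ A2) \ b).card + ((c ∩ A3) \ b).card
        + (b ∩ c ∩ T).card = 4 := by
      have hh := hcard4 (symmDiff c3 b ∩ c)
      rw [inter3_sd_disj hA1n3, inter3_sd_sub hA2s3, inter3_sd_sub hA3s3,
        inter3_sd_disj hTd3, eqi3] at hh
      omega
    have hTTsplit : b ∩ c ∩ T = (b ∩ T) ∩ (c ∩ T) := by
      ext x
      simp only [Finset.mem_inter]
      tauto
    by_cases hTT : b ∩ T = c ∩ T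
    · exfalso
      have hst : (b ∩ c ∩ T).card = 2 := by
        rw [hTTsplit, hTT, Finset.inter_self]
        exact tcT
      omega
    · have hst : (b ∩ c ∩ T).card = 1 := by
        rw [hTTsplit]
        exact pair_inter_card hTc Finset.inter_subset_right Finset.inter_subset_right
          tbT tcT hTT
      exact ⟨by omega, by omega, by omega, hTT⟩
  
  obtain ⟨t1, t2, t3, ht12, ht13, ht23, hTeq⟩ := Finset.card_eq_three.mp hTc
  have pair_cases : ∀ s : Finset (Fin 15), s ⊆ T → s.card = 2 →
      (s = {t2, t3} ∨ s = {t1, t3} ∨ s = {t1, t2}) := by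
    intro s hsub hc
    obtain ⟨u, v, huv, hs⟩ := Finset.card_eq_two.mp hc
    subst hs
    have hu : u ∈ T := hsub (by simp)
    have hv : v ∈ T := hsub (by simp)
    rw [hTeq] at hu hv
    simp only [Finset.mem_insert, Finset.mem_singleton] at hu hv
    rcases hu with rfl | rfl | rfl <;> rcases hv with rfl | rfl | rfl
    · exact absurd rfl huv
    · right; right; rfl
    · right; left; rfl
    · right; right; exact Finset.pair_comm u v
    · exact absurd rfl huv
    · left; rfl
    · right; left; exact Finset.pair_comm u v
    · left; exact Finset.pair_comm u v
    · exact absurd rfl huv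
  have hp12 : ({t2, t3} : Finset (Fin 15)) ≠ {t1, t3} := by
    intro h
    have : t2 ∈ ({t1, t3} : Finset (Fin 15)) := h ▸ (by simp)
    simp only [Finset.mem_insert, Finset.mem_singleton] at this
    rcases this with h' | h'
    · exact ht12 h'.symm
    · exact ht23 h'
  have hp13 : ({t2, t3} : Finset (Fin 15)) ≠ {t1, t2} := by
    intro h
    have : t3 ∈ ({t1, t2} : Finset (Fin 15)) := h ▸ (by simp)
    simp only [Finset.mem_insert, Finset.mem_singleton] at this
    rcases this with h' | h'
    · exact ht13 h'.symm
    · exact ht23 h'.symm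
  have hp23 : ({t1, t3} : Finset (Fin 15)) ≠ {t1, t2} := by
    intro h
    have : t3 ∈ ({t1, t2} : Finset (Fin 15)) := h ▸ (by simp)
    simp only [Finset.mem_insert, Finset.mem_singleton] at this
    rcases this with h' | h'
    · exact ht13 h'.symm
    · exact ht23 h'.symm
  -- fibers
  classical
  set FF : Finset (Fin 15) → Finset (Finset (Fin 15)) :=
    fun p => B.filter (fun c => c ≠ c1 ∧ c ≠ c2 ∧ c ≠ c3 ∧ c ∩ T = p) with hFFdef
  have hFFmem : ∀ p c, c ∈ FF p ↔ (c ∈ B ∧ c ≠ c1 ∧ c ≠ c2 ∧ c ≠ c3 ∧ c ∩ T = p) := by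
    intro p c
    rw [hFFdef]
    simp [Finset.mem_filter]
  have fiber_sub : ∀ p : Finset (Fin 15), ∀ b, b ∈ FF p →
      FF p ⊆ {b, symmDiff c1 b, symmDiff c2 b, symmDiff c3 b} := by
    intro p b hb c hc
    rw [hFFmem] at hb hc
    obtain ⟨hbB, hb1, hb2, hb3, hbp⟩ := hb
    obtain ⟨hcB, hcn1, hcn2, hcn3, hcp⟩ := hc
    by_contra hno
    simp only [Finset.mem_insert, Finset.mem_singleton] at hno
    push_neg at hno
    obtain ⟨hne, hq1, hq2, hq3⟩ := hno
    have := (keyE b hbB hb1 hb2 hb3 c hcB hcn1 hcn2 hcn3 hne hq1 hq2 hq3).2.2.2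
    rw [hbp, hcp] at this
    exact this rfl
  have fiber_quad : ∀ p : Finset (Fin 15), ∀ b, b ∈ FF p →
      FF p = {b, symmDiff c1 b, symmDiff c2 b, symmDiff c3 b} := by
    intro p b hb
    refine Finset.Subset.antisymm (fiber_sub p b hb) ?_
    rw [hFFmem] at hb
    obtain ⟨hbB, hb1, hb2, hb3, hbp⟩ := hb
    intro c hc
    simp only [Finset.mem_insert, Finset.mem_singleton] at hc
    rcases hc with rfl | rfl | rfl | rfl
    · rw [hFFmem]; exact ⟨hbB, hb1, hb2, hb3, hbp⟩
    · obtain ⟨hm, hh1, hh2, hh3⟩ := hclose b hbB hb1 hb2 hb3 c1 (Or.inl rfl)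
      rw [hFFmem]
      exact ⟨hm, hh1, hh2, hh3, by rw [inter_sd_disj hTd1]; exact hbp⟩
    · obtain ⟨hm, hh1, hh2, hh3⟩ := hclose b hbB hb1 hb2 hb3 c2 (Or.inr (Or.inl rfl))
      rw [hFFmem]
      exact ⟨hm, hh1, hh2, hh3, by rw [inter_sd_disj hTd2]; exact hbp⟩
    · obtain ⟨hm, hh1, hh2, hh3⟩ := hclose b hbB hb1 hb2 hb3 c3 (Or.inr (Or.inr rfl))
      rw [hFFmem]
      exact ⟨hm, hh1, hh2, hh3, by rw [inter_sd_disj hTd3]; exact hbp⟩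
  have hcnbot : ∀ O, (O = c1 ∨ O = c2 ∨ O = c3) → O ≠ (⊥ : Finset (Fin 15)) := by
    intro O hO h
    have hOc : IsCenter B O := (hcen O).mpr hO
    have := hsize O hOc.1
    rw [h] at this
    simp at this
  have fiber_card : ∀ p : Finset (Fin 15), ∀ b, b ∈ FF p → (FF p).card = 4 := by
    intro p b hb
    rw [fiber_quad p b hb]
    have hd1 : b ≠ symmDiff c1 b := by
      intro h
      exact hcnbot c1 (Or.inl rfl) (symmDiff_eq_right.mp h.symm)
    have hd2 : b ≠ symmDiff c2 b := by
      intro h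
      exact hcnbot c2 (Or.inr (Or.inl rfl)) (symmDiff_eq_right.mp h.symm)
    have hd3 : b ≠ symmDiff c3 b := by
      intro h
      exact hcnbot c3 (Or.inr (Or.inr rfl)) (symmDiff_eq_right.mp h.symm)
    have hcancel : ∀ x y : Finset (Fin 15), symmDiff x b = symmDiff y b → x = y := by
      intro x y h
      have := congrArg (fun s => symmDiff s b) h
      simpa [symmDiff_symmDiff_cancel_right] using this
    have hd12' : symmDiff c1 b ≠ symmDiff c2 b := fun h => h12 (hcancel _ _ h)
    have hd13' : symmDiff c1 b ≠ symmDiff c3 b := fun h => h13 (hcancel _ _ h)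
    have hd23' : symmDiff c2 b ≠ symmDiff c3 b := fun h => h23 (hcancel _ _ h)
    rw [Finset.card_insert_of_notMem (by simp [hd1, hd2, hd3]),
      Finset.card_insert_of_notMem (by simp [hd12', hd13']),
      Finset.card_insert_of_notMem (by simp [hd23']), Finset.card_singleton]
  have hNsplit : B.filter (fun c => c ≠ c1 ∧ c ≠ c2 ∧ c ≠ c3) =
      (FF {t2, t3} ∪ FF {t1, t3}) ∪ FF {t1, t2} := by
    ext b
    simp only [Finset.mem_filter, Finset.mem_union, hFFmem]
    constructor
    · rintro ⟨hbB, hb1, hb2, hb3⟩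
      have h2 : (b ∩ T).card = 2 := (htrace b hbB hb1 hb2 hb3).2.2.2
      rcases pair_cases (b ∩ T) Finset.inter_subset_right h2 with h | h | h
      · exact Or.inl (Or.inl ⟨hbB, hb1, hb2, hb3, h⟩)
      · exact Or.inl (Or.inr ⟨hbB, hb1, hb2, hb3, h⟩)
      · exact Or.inr ⟨hbB, hb1, hb2, hb3, h⟩
    · rintro ((⟨hbB, hb1, hb2, hb3, _⟩ | ⟨hbB, hb1, hb2, hb3, _⟩) | ⟨hbB, hb1, hb2, hb3, _⟩) <;>
        exact ⟨hbB, hb1, hb2, hb3⟩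
  have hNcard : (B.filter (fun c => c ≠ c1 ∧ c ≠ c2 ∧ c ≠ c3)).card = 12 := by
    have hsub3 : ({c1, c2, c3} : Finset (Finset (Fin 15))) ⊆ B := by
      intro z hz
      simp only [Finset.mem_insert, Finset.mem_singleton] at hz
      rcases hz with rfl | rfl | rfl
      exacts [hc1.1, hc2.1, hc3.1]
    have heq : B.filter (fun c => c ≠ c1 ∧ c ≠ c2 ∧ c ≠ c3) = B \ {c1, c2, c3} := by
      ext b
      simp only [Finset.mem_filter, Finset.mem_sdiff, Finset.mem_insert, Finset.mem_singleton]
      tauto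
    rw [heq, Finset.card_sdiff_of_subset hsub3, hcard15]
    have : ({c1, c2, c3} : Finset (Finset (Fin 15))).card = 3 := by
      rw [Finset.card_insert_of_notMem (by simp [h12, h13]),
        Finset.card_insert_of_notMem (by simp [h23]), Finset.card_singleton]
    omega
  have fdisj : ∀ p q : Finset (Fin 15), p ≠ q → Disjoint (FF p) (FF q) := by
    intro p q hpq
    rw [Finset.disjoint_left]
    intro b hbp hbq
    rw [hFFmem] at hbp hbq
    exact hpq (hbp.2.2.2.2 ▸ hbq.2.2.2.2)
  have hsum : (FF {t2, t3}).card + (FF {t1, t3}).card + (FF {t1, t2}).card = 12 := by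
    rw [← hNcard, hNsplit, Finset.card_union_of_disjoint, Finset.card_union_of_disjoint]
    · exact fdisj _ _ hp12
    · rw [Finset.disjoint_union_left]
      exact ⟨fdisj _ _ hp13, fdisj _ _ hp23⟩
  have fiber_nonempty : ∀ p : Finset (Fin 15), (FF p).card ≤ 4 := by
    intro p
    rcases Finset.eq_empty_or_nonempty (FF p) with h | ⟨b, hb⟩
    · rw [h]; simp
    · rw [fiber_card p b hb]
  have hb1ne : (FF {t2, t3}).Nonempty := by
    rw [← Finset.card_pos]
    have := fiber_nonempty ({t1, t3} : Finset (Fin 15))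
    have := fiber_nonempty ({t1, t2} : Finset (Fin 15))
    omega
  have hb2ne : (FF {t1, t3}).Nonempty := by
    rw [← Finset.card_pos]
    have := fiber_nonempty ({t2, t3} : Finset (Fin 15))
    have := fiber_nonempty ({t1, t2} : Finset (Fin 15))
    omega
  have hb3ne : (FF {t1, t2}).Nonempty := by
    rw [← Finset.card_pos]
    have := fiber_nonempty ({t2, t3} : Finset (Fin 15))
    have := fiber_nonempty ({t1, t3} : Finset (Fin 15))
    omega
  obtain ⟨bb1, hbb1⟩ := hb1ne
  obtain ⟨bb2, hbb2⟩ := hb2ne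
  obtain ⟨bb3, hbb3⟩ := hb3ne
  
  have cross : ∀ b, (b ∈ B ∧ b ≠ c1 ∧ b ≠ c2 ∧ b ≠ c3) →
      ∀ c, (c ∈ B ∧ c ≠ c1 ∧ c ≠ c2 ∧ c ≠ c3) → b ∩ T ≠ c ∩ T →
      ((b ∩ c ∩ A1).card = 1 ∧ (b ∩ c ∩ A2).card = 1 ∧ (b ∩ c ∩ A3).card = 1) := by
    rintro b ⟨hbB, hb1, hb2, hb3⟩ c ⟨hcB, hcn1, hcn2, hcn3⟩ hT
    have hne : c ≠ b := fun h => hT (by rw [h])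
    have hq1 : c ≠ symmDiff c1 b := by
      intro h
      exact hT (by rw [h, inter_sd_disj hTd1])
    have hq2 : c ≠ symmDiff c2 b := by
      intro h
      exact hT (by rw [h, inter_sd_disj hTd2])
    have hq3 : c ≠ symmDiff c3 b := by
      intro h
      exact hT (by rw [h, inter_sd_disj hTd3])
    obtain ⟨r1, r2, r3, _⟩ := keyE b hbB hb1 hb2 hb3 c hcB hcn1 hcn2 hcn3 hne hq1 hq2 hq3
    exact ⟨r1, r2, r3⟩
  obtain ⟨hbb1B, hbb1n1, hbb1n2, hbb1n3, hbb1T⟩ := (hFFmem _ bb1).mp hbb1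
  obtain ⟨hbb2B, hbb2n1, hbb2n2, hbb2n3, hbb2T⟩ := (hFFmem _ bb2).mp hbb2
  obtain ⟨hbb3B, hbb3n1, hbb3n2, hbb3n3, hbb3T⟩ := (hFFmem _ bb3).mp hbb3
  have hT12 : bb1 ∩ T ≠ bb2 ∩ T := by rw [hbb1T, hbb2T]; exact hp12
  have hT13 : bb1 ∩ T ≠ bb3 ∩ T := by rw [hbb1T, hbb3T]; exact hp13
  have hT23 : bb2 ∩ T ≠ bb3 ∩ T := by rw [hbb2T, hbb3T]; exact hp23
  have X12 := cross bb1 ⟨hbb1B, hbb1n1, hbb1n2, hbb1n3⟩ bb2 ⟨hbb2B, hbb2n1, hbb2n2, hbb2n3⟩ hT12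
  have X13 := cross bb1 ⟨hbb1B, hbb1n1, hbb1n2, hbb1n3⟩ bb3 ⟨hbb3B, hbb3n1, hbb3n2, hbb3n3⟩ hT13
  have X23 := cross bb2 ⟨hbb2B, hbb2n1, hbb2n2, hbb2n3⟩ bb3 ⟨hbb3B, hbb3n1, hbb3n2, hbb3n3⟩ hT23
  obtain ⟨u11, u12, u13, _⟩ := htrace bb1 hbb1B hbb1n1 hbb1n2 hbb1n3
  obtain ⟨u21, u22, u23, _⟩ := htrace bb2 hbb2B hbb2n1 hbb2n2 hbb2n3
  obtain ⟨u31, u32, u33, _⟩ := htrace bb3 hbb3B hbb3n1 hbb3n2 hbb3n3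
  have interA : ∀ b c X : Finset (Fin 15), (b ∩ X) ∩ (c ∩ X) = b ∩ c ∩ X := by
    intro b c X
    ext x
    simp only [Finset.mem_inter]
    tauto
  obtain ⟨a1, q11, q12, q13, hA1eq, hA1d, hx11, hx12, hx13⟩ :=
    part_label hA1c Finset.inter_subset_right Finset.inter_subset_right
      Finset.inter_subset_right u11 u21 u31
      (by rw [interA]; exact X12.1) (by rw [interA]; exact X13.1)
      (by rw [interA]; exact X23.1)
  obtain ⟨a2, q21, q22, q23, hA2eq, hA2d, hx21, hx22, hx23⟩ :=
    part_label hA2c Finset.inter_subset_right Finset.inter_subset_right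
      Finset.inter_subset_right u12 u22 u32
      (by rw [interA]; exact X12.2.1) (by rw [interA]; exact X13.2.1)
      (by rw [interA]; exact X23.2.1)
  obtain ⟨a3, q31, q32, q33, hA3eq, hA3d, hx31, hx32, hx33⟩ :=
    part_label hA3c Finset.inter_subset_right Finset.inter_subset_right
      Finset.inter_subset_right u13 u23 u33
      (by rw [interA]; exact X12.2.2) (by rw [interA]; exact X13.2.2)
      (by rw [interA]; exact X23.2.2)
  
  set g : Fin 15 → Fin 15 :=
    ![a1, q11, q12, q13, a2, q21, q22, q23, a3, q31, q32, q33, t1, t2, t3] with hgdef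
  have hgsurj : Function.Surjective g := by
    intro y
    rcases huniv y with h | h | h | h
    · rw [hA1eq] at h
      simp only [Finset.mem_insert, Finset.mem_singleton] at h
      rcases h with rfl | rfl | rfl | rfl
      exacts [⟨0, rfl⟩, ⟨1, rfl⟩, ⟨2, rfl⟩, ⟨3, rfl⟩]
    · rw [hA2eq] at h
      simp only [Finset.mem_insert, Finset.mem_singleton] at h
      rcases h with rfl | rfl | rfl | rfl
      exacts [⟨4, rfl⟩, ⟨5, rfl⟩, ⟨6, rfl⟩, ⟨7, rfl⟩]
    · rw [hA3eq] at h
      simp only [Finset.mem_insert, Finset.mem_singleton] at h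
      rcases h with rfl | rfl | rfl | rfl
      exacts [⟨8, rfl⟩, ⟨9, rfl⟩, ⟨10, rfl⟩, ⟨11, rfl⟩]
    · rw [hTeq] at h
      simp only [Finset.mem_insert, Finset.mem_singleton] at h
      rcases h with rfl | rfl | rfl
      exacts [⟨12, rfl⟩, ⟨13, rfl⟩, ⟨14, rfl⟩]
  have hgbij : Function.Bijective g := Finite.surjective_iff_bijective.mp hgsurj
  set π : Equiv.Perm (Fin 15) := (Equiv.ofBijective g hgbij).symm with hπdef
  have hπg : ∀ i, π (g i) = i := fun i => (Equiv.ofBijective g hgbij).symm_apply_apply i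
  have hv0 : π a1 = 0 := hπg 0
  have hv1 : π q11 = 1 := hπg 1
  have hv2 : π q12 = 2 := hπg 2
  have hv3 : π q13 = 3 := hπg 3
  have hv4 : π a2 = 4 := hπg 4
  have hv5 : π q21 = 5 := hπg 5
  have hv6 : π q22 = 6 := hπg 6
  have hv7 : π q23 = 7 := hπg 7
  have hv8 : π a3 = 8 := hπg 8
  have hv9 : π q31 = 9 := hπg 9
  have hv10 : π q32 = 10 := hπg 10
  have hv11 : π q33 = 11 := hπg 11
  have hv12 : π t1 = 12 := hπg 12
  have hv13 : π t2 = 13 := hπg 13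
  have hv14 : π t3 = 14 := hπg 14
  have img_pair : ∀ x y : Fin 15, Finset.image ⇑π {x, y} = {π x, π y} := by
    intro x y
    rw [Finset.image_insert, Finset.image_singleton]
  have img_triple : ∀ x y z : Fin 15, Finset.image ⇑π {x, y, z} = {π x, π y, π z} := by
    intro x y z
    rw [Finset.image_insert, Finset.image_insert, Finset.image_singleton]
  have img_quad : ∀ x y z w : Fin 15, Finset.image ⇑π {x, y, z, w} = {π x, π y, π z, π w} := by
    intro x y z w
    rw [Finset.image_insert, Finset.image_insert, Finset.image_insert, Finset.image_singleton]
  have himA1 : A1.image ⇑π = {0, 1, 2, 3} := by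
    rw [hA1eq, img_quad, hv0, hv1, hv2, hv3]
  have himA2 : A2.image ⇑π = {4, 5, 6, 7} := by
    rw [hA2eq, img_quad, hv4, hv5, hv6, hv7]
  have himA3 : A3.image ⇑π = {8, 9, 10, 11} := by
    rw [hA3eq, img_quad, hv8, hv9, hv10, hv11]
  have himc1 : c1.image ⇑π = O1c := by
    rw [hc1U, Finset.image_union, himA1, himA2]
    decide
  have himc2 : c2.image ⇑π = O2c := by
    rw [hc2U, Finset.image_union, himA1, himA3]
    decide
  have himc3 : c3.image ⇑π = O3c := by
    rw [hc3U, Finset.image_union, himA2, himA3]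
    decide
  have hdecomp : ∀ s : Finset (Fin 15), s = ((s ∩ A1) ∪ (s ∩ A2) ∪ (s ∩ A3)) ∪ (s ∩ T) := by
    intro s
    ext x
    simp only [Finset.mem_union, Finset.mem_inter]
    constructor
    · intro hx
      rcases huniv x with h | h | h | h
      · exact Or.inl (Or.inl (Or.inl ⟨hx, h⟩))
      · exact Or.inl (Or.inl (Or.inr ⟨hx, h⟩))
      · exact Or.inl (Or.inr ⟨hx, h⟩)
      · exact Or.inr ⟨hx, h⟩
    · rintro (((⟨h, _⟩ | ⟨h, _⟩) | ⟨h, _⟩) | ⟨h, _⟩) <;> exact h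
  have himsplit : ∀ s : Finset (Fin 15), s.image ⇑π =
      (((s ∩ A1).image ⇑π ∪ (s ∩ A2).image ⇑π ∪ (s ∩ A3).image ⇑π) ∪ (s ∩ T).image ⇑π) := by
    intro s
    conv_lhs => rw [hdecomp s]
    rw [Finset.image_union, Finset.image_union, Finset.image_union]
  have trform : ∀ (s : Finset (Fin 15)) (A : Finset (Fin 15)) (a q : Fin 15),
      (s ∩ A = {a, q} ∨ s ∩ A = A \ {a, q}) →
      ((s ∩ A).image ⇑π = {π a, π q} ∨ (s ∩ A).image ⇑π = A.image ⇑π \ {π a, π q}) := by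
    rintro s A a q (h | h)
    · left; rw [h, img_pair]
    · right
      rw [h, Finset.image_sdiff _ _ π.injective, img_pair]
  have himbb1 : ∃ e : Bool, bb1.image ⇑π ∈ orb0 e := by
    have hTim : (bb1 ∩ T).image ⇑π = {13, 14} := by rw [hbb1T, img_pair, hv13, hv14]
    have e1 := trform bb1 A1 a1 q11 hx11
    have e2 := trform bb1 A2 a2 q21 hx21
    have e3 := trform bb1 A3 a3 q31 hx31
    rw [hv0, hv1, himA1] at e1
    rw [hv4, hv5, himA2] at e2
    rw [hv8, hv9, himA3] at e3
    rcases e1 with h1 | h1 <;> rcases e2 with h2 | h2 <;> rcases e3 with h3 | h3 <;>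
      rw [himsplit bb1, hTim, h1, h2, h3] <;> decide
  have himbb2 : ∃ e : Bool, bb2.image ⇑π ∈ orb1 e := by
    have hTim : (bb2 ∩ T).image ⇑π = {12, 14} := by rw [hbb2T, img_pair, hv12, hv14]
    have e1 := trform bb2 A1 a1 q12 hx12
    have e2 := trform bb2 A2 a2 q22 hx22
    have e3 := trform bb2 A3 a3 q32 hx32
    rw [hv0, hv2, himA1] at e1
    rw [hv4, hv6, himA2] at e2
    rw [hv8, hv10, himA3] at e3
    rcases e1 with h1 | h1 <;> rcases e2 with h2 | h2 <;> rcases e3 with h3 | h3 <;>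
      rw [himsplit bb2, hTim, h1, h2, h3] <;> decide
  have himbb3 : ∃ e : Bool, bb3.image ⇑π ∈ orb2 e := by
    have hTim : (bb3 ∩ T).image ⇑π = {12, 13} := by rw [hbb3T, img_pair, hv12, hv13]
    have e1 := trform bb3 A1 a1 q13 hx13
    have e2 := trform bb3 A2 a2 q23 hx23
    have e3 := trform bb3 A3 a3 q33 hx33
    rw [hv0, hv3, himA1] at e1
    rw [hv4, hv7, himA2] at e2
    rw [hv8, hv11, himA3] at e3
    rcases e1 with h1 | h1 <;> rcases e2 with h2 | h2 <;> rcases e3 with h3 | h3 <;>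
      rw [himsplit bb3, hTim, h1, h2, h3] <;> decide
  obtain ⟨ee1, he1⟩ := himbb1
  obtain ⟨ee2, he2⟩ := himbb2
  obtain ⟨ee3, he3⟩ := himbb3
  have orbit_image : ∀ b : Finset (Fin 15),
      Finset.image (fun c => c.image ⇑π) {b, symmDiff c1 b, symmDiff c2 b, symmDiff c3 b} =
      {b.image ⇑π, symmDiff O1c (b.image ⇑π), symmDiff O2c (b.image ⇑π),
        symmDiff O3c (b.image ⇑π)} := by
    intro b
    rw [Finset.image_insert, Finset.image_insert, Finset.image_insert, Finset.image_singleton]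
    rw [image_symmDiff' π c1 b, image_symmDiff' π c2 b, image_symmDiff' π c3 b,
      himc1, himc2, himc3]
  have hFim1 : Finset.image (fun c => c.image ⇑π) (FF {t2, t3}) = orb0 ee1 := by
    rw [fiber_quad _ bb1 hbb1, orbit_image bb1]
    exact orb0_quad ee1 _ he1
  have hFim2 : Finset.image (fun c => c.image ⇑π) (FF {t1, t3}) = orb1 ee2 := by
    rw [fiber_quad _ bb2 hbb2, orbit_image bb2]
    exact orb1_quad ee2 _ he2
  have hFim3 : Finset.image (fun c => c.image ⇑π) (FF {t1, t2}) = orb2 ee3 := by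
    rw [fiber_quad _ bb3 hbb3, orbit_image bb3]
    exact orb2_quad ee3 _ he3
  have hBdec : B = (({c1, c2, c3} : Finset (Finset (Fin 15))) ∪ FF {t2, t3} ∪ FF {t1, t3})
      ∪ FF {t1, t2} := by
    ext b
    simp only [Finset.mem_union, Finset.mem_insert, Finset.mem_singleton, hFFmem]
    constructor
    · intro hb
      by_cases hn1 : b = c1
      · exact Or.inl (Or.inl (Or.inl (Or.inl hn1)))
      by_cases hn2 : b = c2
      · exact Or.inl (Or.inl (Or.inl (Or.inr (Or.inl hn2))))
      by_cases hn3 : b = c3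
      · exact Or.inl (Or.inl (Or.inl (Or.inr (Or.inr hn3))))
      have h2 : (b ∩ T).card = 2 := (htrace b hb hn1 hn2 hn3).2.2.2
      rcases pair_cases (b ∩ T) Finset.inter_subset_right h2 with h | h | h
      · exact Or.inl (Or.inl (Or.inr ⟨hb, hn1, hn2, hn3, h⟩))
      · exact Or.inl (Or.inr ⟨hb, hn1, hn2, hn3, h⟩)
      · exact Or.inr ⟨hb, hn1, hn2, hn3, h⟩
    · intro h
      rcases h with h | h
      · rcases h with h | h
        · rcases h with h | h
          · rcases h with rfl | rfl | rfl
            exacts [hc1.1, hc2.1, hc3.1]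
          · exact h.1
        · exact h.1
      · exact h.1
  refine ⟨π, ee1, ee2, ee3, ?_⟩
  show B.image (fun b => b.image ⇑π) = Dd ee1 ee2 ee3
  conv_lhs => rw [hBdec]
  rw [Finset.image_union, Finset.image_union, Finset.image_union]
  rw [hFim1, hFim2, hFim3]
  rw [Finset.image_insert, Finset.image_insert, Finset.image_singleton]
  show ((({c1.image ⇑π, c2.image ⇑π, c3.image ⇑π} : Finset (Finset (Fin 15)))
    ∪ orb0 ee1 ∪ orb1 ee2) ∪ orb2 ee3) = Dd ee1 ee2 ee3
  rw [himc1, himc2, himc3]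
  rfl

end Structure


/-- for a design of type (C2), the actions of `Aut(𝒟)` on points and on
blocks each have exactly two orbits, of sizes 3 and 12. -/
theorem stmt14 (B : Finset (Finset (Fin 15))) (hD : IsDesign B)
    (hC2 : {O | IsCenter B O}.ncard = 3) :
    (∃ S₁ S₂ : Set (Fin 15),
      {S | ∃ x : Fin 15, S = pointOrbit B x} = {S₁, S₂} ∧
      S₁.ncard = 3 ∧ S₂.ncard = 12) ∧
    (∃ T₁ T₂ : Set (Finset (Fin 15)),
      {T | ∃ b ∈ B, T = blockOrbit B b} = {T₁, T₂} ∧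
      T₁.ncard = 3 ∧ T₂.ncard = 12) := by
  obtain ⟨π, e1, e2, e3, hmap⟩ := structureMain B hD hC2
  have hC2' : {O | IsCenter (mapB π B) O}.ncard = 3 := by
    rw [ncard_centers_map]
    exact hC2
  apply concl_map π B
  rw [hmap] at hC2' ⊢
  cases e1 <;> cases e2 <;> cases e3
  · exact good_000
  · exact absurd hC2' bad_001
  · exact absurd hC2' bad_010
  · exact good_011
  · exact absurd hC2' bad_100
  · exact good_101
  · exact good_110
  · exact absurd hC2' bad_111
end

section
/- Let 𝒟 be a symmetric (15,8,4)-design whose block family has a center point O. Then Aut(𝒟) contains a subgroup H isomorphic to (ZMod 2)³ such that every element of H fixes every point of Fin 15 outside O, and H acts sharply (simply) transitively on the 8 elements of O; in particular, 𝒟 is 7-pyramidal. -/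
/-!
A block `b ≠ O` meets `O` in 4 points and `O △ b` is again a block; comparing `|b ∩ c|` with
`|b ∩ (O △ c)|` shows that the traces on `O` of two further blocks `c ≠ b, O △ b` share exactly
2 points. Counting (`14 · 4 = 56 = C(8,3)`) then makes the 14 traces the planes of an affine space
`AG(3,2)` on `O`: every triple of `O` lies in exactly one of them.

An automorphism fixing every point outside `O` sends each block `b` to `b` or to `O △ b`, so on `O`
it keeps or swaps the two sides of every plane. Since the planes separate the points of `O`, this
pins it down as the translation `z ↦ z + y - x` with `y` the image of `x`. Conversely that
translation, described through the planes alone, is an automorphism because two planes always meet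
in an even number of points. Hence these automorphisms act regularly on `O` and are involutions,
so they form a group `≅ (ℤ/2)³`.
-/

open Finset

theorem Equiv.Perm.apply_mem_iff_of_forall_notMem {α : Type*} {σ : Equiv.Perm α} {s : Finset α}
    (h : ∀ z ∉ s, σ z = z) (z : α) : σ z ∈ s ↔ z ∈ s := by
  by_cases hz : z ∈ s
  · refine iff_of_true (by_contra fun hσz => ?_) hz
    rw [σ.injective (h _ hσz)] at hσz
    exact hσz hz
  · rw [h z hz]

theorem Finset.image_perm_eq_of_apply_mem_iff {α : Type*} [DecidableEq α] (σ : Equiv.Perm α)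
    {b c : Finset α} (h : ∀ z, σ z ∈ c ↔ z ∈ b) : b.image σ = c := by
  ext a
  simp only [mem_image]
  constructor
  · rintro ⟨z, hz, rfl⟩
    exact (h z).2 hz
  · exact fun ha => ⟨σ.symm a, (h _).1 (by simpa using ha), by simp⟩

theorem Finset.two_mul_card_inter_inter_of_card_inter_eq {α : Type*} [DecidableEq α]
    {O b c : Finset α} (h : #(b ∩ c) = #(b ∩ symmDiff O c)) :
    2 * #(O ∩ b ∩ c) = #(O ∩ b) := by
  have hc := card_inter_add_card_sdiff (b ∩ c) O
  have hd := card_inter_add_card_sdiff (b ∩ symmDiff O c) O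
  have hb := card_inter_add_card_sdiff (O ∩ b) c
  have e1 : b ∩ c ∩ O = O ∩ b ∩ c := by ext; simp; tauto
  have e2 : b ∩ symmDiff O c ∩ O = (O ∩ b) \ c := by ext; simp [mem_symmDiff]; tauto
  have e3 : (b ∩ symmDiff O c) \ O = (b ∩ c) \ O := by ext; simp [mem_symmDiff]; tauto
  rw [e1] at hc
  rw [e2, e3] at hd
  omega

theorem Finset.iff_iff_of_even_card_filter {α : Type*} [DecidableEq α] {p : α → Prop}
    [DecidablePred p] {x y z w : α} (hxy : x ≠ y) (hxz : x ≠ z) (hxw : x ≠ w) (hyz : y ≠ z)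
    (hyw : y ≠ w) (hzw : z ≠ w) (h : Even #(({x, y, z, w} : Finset α).filter p)) :
    ((p z ↔ p w) ↔ (p x ↔ p y)) := by
  by_cases hx : p x <;> by_cases hy : p y <;> by_cases hz : p z <;> by_cases hw : p w <;>
    simp_all [filter_insert, filter_singleton, Nat.even_iff]

theorem Finset.existsUnique_superset_of_card_mul_choose {ι α : Type*} [DecidableEq α]
    {s : Finset ι} {f : ι → Finset α} {O : Finset α} {k t : ℕ}
    (hsub : ∀ i ∈ s, f i ⊆ O) (hcard : ∀ i ∈ s, #(f i) = k)
    (hinter : ∀ i ∈ s, ∀ j ∈ s, i ≠ j → #(f i ∩ f j) < t)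
    (htotal : #s * k.choose t = (#O).choose t)
    {S : Finset α} (hS : S ⊆ O) (hSt : #S = t) : ∃! i, i ∈ s ∧ S ⊆ f i := by
  have hunique {T : Finset α} (hT : #T = t) {i j : ι} (hi : i ∈ s ∧ T ⊆ f i)
      (hj : j ∈ s ∧ T ⊆ f j) : i = j := by
    by_contra hij
    exact (hinter i hi.1 j hj.1 hij).not_ge (hT ▸ card_le_card (subset_inter hi.2 hj.2))
  have hcover : s.biUnion (fun i => (f i).powersetCard t) = O.powersetCard t := by
    refine eq_of_subset_of_card_le (biUnion_subset.2 fun i hi => powersetCard_mono (hsub i hi)) ?_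
    rw [card_biUnion, card_powersetCard, ← htotal, sum_congr rfl fun i hi => by
      rw [card_powersetCard, hcard i hi], sum_const, smul_eq_mul]
    intro i hi j hj hij
    refine disjoint_left.2 fun T hTi hTj => hij ?_
    rw [mem_powersetCard] at hTi hTj
    exact hunique hTi.2 ⟨hi, hTi.1⟩ ⟨hj, hTj.1⟩
  obtain ⟨i, hi, hSi⟩ := mem_biUnion.1 (hcover ▸ mem_powersetCard.2 ⟨hS, hSt⟩)
  rw [mem_powersetCard] at hSi
  exact ⟨i, ⟨hi, hSi.1⟩, fun j hj => hunique hSt hj ⟨hi, hSi.1⟩⟩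

theorem nonempty_mulEquiv_of_sq_eq_one {G H : Type*} [Group G] [Group H] [Finite G] [Finite H]
    (hG : ∀ g : G, g ^ 2 = 1) (hH : ∀ h : H, h ^ 2 = 1) (hcard : Nat.card G = Nat.card H) :
    Nonempty (G ≃* H) := by
  let : CommGroup G :=
    { mul_comm := Commute.of_orderOf_dvd_two fun g => orderOf_dvd_of_pow_eq_one (hG g) }
  let : CommGroup H :=
    { mul_comm := Commute.of_orderOf_dvd_two fun h => orderOf_dvd_of_pow_eq_one (hH h) }
  let : Module (ZMod 2) (Additive G) := AddCommGroup.zmodModule fun g => hG g.toMul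
  let : Module (ZMod 2) (Additive H) := AddCommGroup.zmodModule fun h => hH h.toMul
  have : Fintype (Additive G) := Fintype.ofFinite _
  have : Fintype (Additive H) := Fintype.ofFinite _
  have hrank : Module.finrank (ZMod 2) (Additive G) = Module.finrank (ZMod 2) (Additive H) := by
    apply Nat.pow_right_injective le_rfl
    have hG' := Module.card_eq_pow_finrank (K := ZMod 2) (V := Additive G)
    have hH' := Module.card_eq_pow_finrank (K := ZMod 2) (V := Additive H)
    simp only [Fintype.card_eq_nat_card, Nat.card_zmod] at hG' hH'
    exact hG'.symm.trans (hcard.trans hH')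
  obtain ⟨e⟩ := FiniteDimensional.nonempty_linearEquiv_of_finrank_eq hrank
  exact ⟨AddEquiv.toMultiplicative e.toAddEquiv⟩

namespace IsCenter

variable {B : Finset (Finset (Fin 15))} {O b c : Finset (Fin 15)} {x y z w : Fin 15}

theorem card_eq_eight (hD : IsDesign B) (hO : IsCenter B O) : #O = 8 :=
  hD.2.1 O hO.1

theorem card_inter (hD : IsDesign B) (hO : IsCenter B O) (hb : b ∈ B.erase O) :
    #(O ∩ b) = 4 :=
  hD.2.2 O hO.1 b (mem_of_mem_erase hb) (ne_of_mem_erase hb).symm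

theorem symmDiff_mem_erase (hD : IsDesign B) (hO : IsCenter B O) (hb : b ∈ B.erase O) :
    symmDiff O b ∈ B.erase O := by
  refine mem_erase.2 ⟨fun h => ?_, hO.2 b (mem_of_mem_erase hb) (ne_of_mem_erase hb)⟩
  have := hD.2.1 b (mem_of_mem_erase hb)
  simp_all [symmDiff_eq_left]

theorem card_inter_inter_eq_two (hD : IsDesign B) (hO : IsCenter B O) (hb : b ∈ B.erase O)
    (hc : c ∈ B.erase O) (hcb : c ≠ b) (hcb' : c ≠ symmDiff O b) : #(O ∩ b ∩ c) = 2 := by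
  have hbc : b ≠ symmDiff O c := fun h => hcb' (by rw [h, symmDiff_symmDiff_cancel_left])
  have h := two_mul_card_inter_inter_of_card_inter_eq (O := O) (b := b) (c := c) <| by
    rw [hD.2.2 b (mem_of_mem_erase hb) c (mem_of_mem_erase hc) hcb.symm,
      hD.2.2 b (mem_of_mem_erase hb) _ (mem_of_mem_erase (symmDiff_mem_erase hD hO hc)) hbc]
  rw [card_inter hD hO hb] at h
  omega

theorem even_card_inter_inter (hD : IsDesign B) (hO : IsCenter B O) (hb : b ∈ B.erase O)
    (hc : c ∈ B.erase O) : Even #(O ∩ b ∩ c) := by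
  by_cases hcb : c = b
  · rw [hcb, inter_assoc, inter_self, card_inter hD hO hb]
    decide
  by_cases hcb' : c = symmDiff O b
  · have : O ∩ b ∩ c = ∅ := by ext; simp [hcb', mem_symmDiff]; tauto
    simp [this]
  rw [card_inter_inter_eq_two hD hO hb hc hcb hcb']
  decide

theorem existsUnique_block (hD : IsDesign B) (hO : IsCenter B O) (hx : x ∈ O) (hy : y ∈ O)
    (hz : z ∈ O) (hxy : x ≠ y) (hxz : x ≠ z) (hyz : y ≠ z) :
    ∃! b, b ∈ B.erase O ∧ x ∈ b ∧ y ∈ b ∧ z ∈ b := by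
  have h := existsUnique_superset_of_card_mul_choose (s := B.erase O) (f := (O ∩ ·)) (k := 4)
    (t := 3) (fun b _ => inter_subset_left) (fun b hb => card_inter hD hO hb)
    (fun b hb c hc hbc => by
      by_cases hcb' : c = symmDiff O b
      · have : O ∩ b ∩ (O ∩ c) = ∅ := by ext; simp [hcb', mem_symmDiff]; tauto
        simp [this]
      · have : O ∩ b ∩ (O ∩ c) = O ∩ b ∩ c := by ext; simp; tauto
        rw [this, card_inter_inter_eq_two hD hO hb hc (Ne.symm hbc) hcb']
        norm_num)
    (by rw [card_erase_of_mem hO.1, hD.1, card_eq_eight hD hO]; rfl)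
    (S := {x, y, z}) (by simp [insert_subset_iff, hx, hy, hz])
    (card_eq_three.2 ⟨x, y, z, hxy, hxz, hyz, rfl⟩)
  simpa [insert_subset_iff, hx, hy, hz] using h

theorem exists_block_separating (hD : IsDesign B) (hO : IsCenter B O) (hx : x ∈ O) (hz : z ∈ O)
    (hw : w ∈ O) (hxz : x ≠ z) (hwx : w ≠ x) (hwz : w ≠ z) :
    ∃ b ∈ B.erase O, x ∈ b ∧ z ∈ b ∧ w ∉ b := by
  have hxzw := existsUnique_block hD hO hx hz hw hxz hwx.symm hwz.symm
  obtain ⟨c, hc, hxc, hzc, hwc⟩ := hxzw.exists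
  obtain ⟨u, hu, huc⟩ := exists_mem_notMem_of_card_lt_card (s := O ∩ c) (t := O) <| by
    rw [card_inter hD hO hc, card_eq_eight hD hO]; norm_num
  have huc : u ∉ c := fun h => huc (mem_inter.2 ⟨hu, h⟩)
  obtain ⟨b, ⟨hb, hxb, hzb, hub⟩, -⟩ := existsUnique_block hD hO hx hz hu hxz
    (by rintro rfl; exact huc hxc) (by rintro rfl; exact huc hzc)
  refine ⟨b, hb, hxb, hzb, fun hwb => huc ?_⟩
  rwa [hxzw.unique ⟨hb, hxb, hzb, hwb⟩ ⟨hc, hxc, hzc, hwc⟩] at hub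

theorem eq_of_forall_mem_iff (hD : IsDesign B) (hO : IsCenter B O) (hz : z ∈ O) (hw : w ∈ O)
    (h : ∀ b ∈ B.erase O, z ∈ b ↔ w ∈ b) : z = w := by
  by_contra hzw
  obtain ⟨u, hu, huzw⟩ := exists_mem_notMem_of_card_lt_card (s := {z, w}) (t := O) <| by
    rw [card_eq_eight hD hO]; exact card_le_two.trans_lt (by norm_num)
  simp only [mem_insert, mem_singleton, not_or] at huzw
  obtain ⟨b, hb, hzb, -, hwb⟩ :=
    exists_block_separating hD hO hz hu hw (Ne.symm huzw.1) (Ne.symm hzw) (Ne.symm huzw.2)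
  exact hwb ((h b hb).1 hzb)

theorem image_eq_or_eq_symmDiff (hD : IsDesign B) (hO : IsCenter B O)
    {τ : Equiv.Perm (Fin 15)} (hτ : τ ∈ designAut B) (hfix : ∀ z ∉ O, τ z = z)
    (hb : b ∈ B.erase O) : b.image τ = b ∨ b.image τ = symmDiff O b := by
  set c := b.image τ
  have hcB : c ∈ B := hτ b (mem_of_mem_erase hb)
  have houter : b \ O ⊆ c := fun a ha =>
    mem_image.2 ⟨a, (mem_sdiff.1 ha).1, hfix a (mem_sdiff.1 ha).2⟩
  have hcard_outer : #(b \ O) = 4 := by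
    have := card_inter_add_card_sdiff b O
    rw [inter_comm, card_inter hD hO hb, hD.2.1 b (mem_of_mem_erase hb)] at this
    omega
  have hcO : c ≠ O := by
    intro h
    have : b \ O = ∅ := eq_empty_of_forall_notMem fun a ha =>
      (mem_sdiff.1 ha).2 (h ▸ houter ha)
    simp [this] at hcard_outer
  by_contra! hne
  -- `b ∩ c` contains the 4 points of `b` outside `O`, and 2 more inside `O`
  have h2 := card_inter_inter_eq_two hD hO hb (mem_erase.2 ⟨hcO, hcB⟩) hne.1 hne.2
  have hsplit := card_inter_add_card_sdiff (b ∩ c) O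
  have hle : #(b \ O) ≤ #((b ∩ c) \ O) :=
    card_le_card fun a ha => mem_sdiff.2 ⟨mem_inter.2 ⟨(mem_sdiff.1 ha).1, houter ha⟩,
      (mem_sdiff.1 ha).2⟩
  rw [show b ∩ c ∩ O = O ∩ b ∩ c by ext; simp; tauto, h2,
    hD.2.2 b (mem_of_mem_erase hb) c hcB (Ne.symm hne.1)] at hsplit
  omega

end IsCenter

/-- The traces `O ∩ b` of the blocks `b ≠ O` are the planes of an affine space `AG(3, 2)` on `O`,
and for points of `O` this says `w = z + y - x`. -/
def IsTranslate (B : Finset (Finset (Fin 15))) (O : Finset (Fin 15)) (x y z w : Fin 15) : Prop :=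
  ∀ b ∈ B.erase O, (z ∈ b ↔ w ∈ b) ↔ (x ∈ b ↔ y ∈ b)

namespace IsTranslate

variable {B : Finset (Finset (Fin 15))} {O : Finset (Fin 15)} {x y z w w' : Fin 15}

theorem symm (h : IsTranslate B O x y z w) : IsTranslate B O x y w z :=
  fun b hb => iff_comm.trans (h b hb)

theorem unique (hD : IsDesign B) (hO : IsCenter B O) (hw : w ∈ O) (hw' : w' ∈ O)
    (h : IsTranslate B O x y z w) (h' : IsTranslate B O x y z w') : w = w' :=
  hO.eq_of_forall_mem_iff hD hw hw' fun b hb => by have := h b hb; have := h' b hb; tauto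

theorem exists_mem (hD : IsDesign B) (hO : IsCenter B O) (hx : x ∈ O) (hy : y ∈ O)
    (hz : z ∈ O) : ∃ w ∈ O, IsTranslate B O x y z w := by
  by_cases hzx : z = x
  · exact ⟨y, hy, fun b _ => by rw [hzx]⟩
  by_cases hzy : z = y
  · exact ⟨x, hx, fun b _ => by rw [hzy]; exact iff_comm⟩
  by_cases hxy : x = y
  · exact ⟨z, hz, fun b _ => by simp [hxy]⟩
  obtain ⟨c, ⟨hc, hxc, hyc, hzc⟩, -⟩ :=
    hO.existsUnique_block hD hx hy hz hxy (Ne.symm hzx) (Ne.symm hzy)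
  obtain ⟨w, hw, hwxyz⟩ := exists_mem_notMem_of_card_lt_card (s := {x, y, z}) (t := O ∩ c) <| by
    rw [hO.card_inter hD hc]; exact card_le_three.trans_lt (by norm_num)
  simp only [mem_insert, mem_singleton, not_or] at hwxyz
  have htrace : O ∩ c = {x, y, z, w} := by
    refine (eq_of_subset_of_card_le ?_ ?_).symm
    · simp [insert_subset_iff, hx, hy, hz, hxc, hyc, hzc, (mem_inter.1 hw).1, (mem_inter.1 hw).2]
    · rw [hO.card_inter hD hc, card_insert_of_notMem (by simp; tauto),
        card_insert_of_notMem (by simp; tauto), card_pair (Ne.symm hwxyz.2.2)]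
  refine ⟨w, (mem_inter.1 hw).1, fun b hb => ?_⟩
  have heven := hO.even_card_inter_inter hD hb hc
  rw [show O ∩ b ∩ c = (O ∩ c).filter (· ∈ b) by ext; simp; tauto, htrace] at heven
  exact iff_iff_of_even_card_filter hxy (Ne.symm hzx) (Ne.symm hwxyz.1) (Ne.symm hzy)
    (Ne.symm hwxyz.2.1) (Ne.symm hwxyz.2.2) heven

end IsTranslate

def autFixingCompl (B : Finset (Finset (Fin 15))) (O : Finset (Fin 15)) :
    Subgroup (Equiv.Perm (Fin 15)) :=
  designAut B ⊓ fixingSubgroup (Equiv.Perm (Fin 15)) ((O : Set (Fin 15))ᶜ)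

theorem mem_autFixingCompl {B : Finset (Finset (Fin 15))} {O : Finset (Fin 15)}
    {σ : Equiv.Perm (Fin 15)} :
    σ ∈ autFixingCompl B O ↔ σ ∈ designAut B ∧ ∀ z ∉ O, σ z = z := by
  simp [autFixingCompl, Subgroup.mem_inf, mem_fixingSubgroup_iff, Equiv.Perm.smul_def]

namespace IsCenter

variable {B : Finset (Finset (Fin 15))} {O : Finset (Fin 15)} {σ τ : Equiv.Perm (Fin 15)}
  {x y : Fin 15}

theorem apply_mem_of_mem_autFixingCompl (hσ : σ ∈ autFixingCompl B O) {z : Fin 15}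
    (hz : z ∈ O) : σ z ∈ O :=
  (Equiv.Perm.apply_mem_iff_of_forall_notMem (mem_autFixingCompl.1 hσ).2 z).2 hz

theorem mem_designAut_of_isTranslate (hO : IsCenter B O) (hfix : ∀ z ∉ O, σ z = z)
    (hσ : ∀ z ∈ O, IsTranslate B O x y z (σ z)) : σ ∈ designAut B := by
  have hσO := Equiv.Perm.apply_mem_iff_of_forall_notMem hfix
  intro b hb
  by_cases hbO : b = O
  · rwa [image_perm_eq_of_apply_mem_iff σ (hbO ▸ hσO)]
  have hb' : b ∈ B.erase O := mem_erase.2 ⟨hbO, hb⟩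
  by_cases hxy : x ∈ b ↔ y ∈ b
  · rwa [image_perm_eq_of_apply_mem_iff σ fun z => ?_]
    by_cases hz : z ∈ O
    · have := hσ z hz b hb'; tauto
    · rw [hfix z hz]
  · rw [image_perm_eq_of_apply_mem_iff σ (c := symmDiff O b) fun z => ?_]
    · exact hO.2 b hb hbO
    by_cases hz : z ∈ O
    · have := hσ z hz b hb'
      have := (hσO z).2 hz
      simp only [mem_symmDiff]; tauto
    · simp [hfix z hz, mem_symmDiff, hz]

theorem isTranslate_of_mem_autFixingCompl (hD : IsDesign B) (hO : IsCenter B O)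
    (hσ : σ ∈ autFixingCompl B O) {z : Fin 15} (hx : x ∈ O) (hz : z ∈ O) :
    IsTranslate B O x (σ x) z (σ z) := by
  have hσx := apply_mem_of_mem_autFixingCompl hσ hx
  have hσz := apply_mem_of_mem_autFixingCompl hσ hz
  obtain ⟨hσ, hfix⟩ := mem_autFixingCompl.1 hσ
  intro b hb
  have hmem (u : Fin 15) : σ u ∈ b.image σ ↔ u ∈ b := σ.injective.mem_finset_image
  rcases hO.image_eq_or_eq_symmDiff hD hσ hfix hb with h | h <;> rw [h] at hmem
  · simp [hmem]
  · have := hmem x; have := hmem z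
    simp only [mem_symmDiff] at *; tauto

theorem exists_mem_autFixingCompl (hD : IsDesign B) (hO : IsCenter B O) (hx : x ∈ O)
    (hy : y ∈ O) : ∃ σ ∈ autFixingCompl B O, σ x = y := by
  classical
  have : ∀ z, ∃ w, z ∈ O → w ∈ O ∧ IsTranslate B O x y z w := fun z =>
    if hz : z ∈ O then (IsTranslate.exists_mem hD hO hx hy hz).imp fun _ hw _ => hw
    else ⟨z, fun h => absurd h hz⟩
  choose p hp using this
  have hinv : Function.Involutive fun z => if z ∈ O then p z else z := by
    intro z
    by_cases hz : z ∈ O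
    · have hpz := (hp z hz).1
      simp only [hz, hpz, if_true]
      exact (hp _ hpz).2.unique hD hO (hp _ hpz).1 hz (hp z hz).2.symm
    · simp [hz]
  refine ⟨hinv.toPerm, mem_autFixingCompl.2
    ⟨mem_designAut_of_isTranslate (x := x) (y := y) hO ?_ ?_, ?_⟩, ?_⟩
  · intro z hz; simp [hz]
  · intro z hz; simpa [hz] using (hp z hz).2
  · intro z hz; simp [hz]
  · simpa [hx] using (hp x hx).2.unique hD hO (hp x hx).1 hy fun b _ => Iff.rfl

theorem eq_of_apply_eq (hD : IsDesign B) (hO : IsCenter B O) (hσ : σ ∈ autFixingCompl B O)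
    (hτ : τ ∈ autFixingCompl B O) (hx : x ∈ O) (hστ : σ x = τ x) : σ = τ := by
  refine Equiv.ext fun z => ?_
  by_cases hz : z ∈ O
  · refine IsTranslate.unique hD hO (apply_mem_of_mem_autFixingCompl hσ hz)
      (apply_mem_of_mem_autFixingCompl hτ hz) (isTranslate_of_mem_autFixingCompl hD hO hσ hx hz) ?_
    rw [hστ]
    exact isTranslate_of_mem_autFixingCompl hD hO hτ hx hz
  · rw [(mem_autFixingCompl.1 hσ).2 z hz, (mem_autFixingCompl.1 hτ).2 z hz]

theorem sq_eq_one_of_mem_autFixingCompl (hD : IsDesign B) (hO : IsCenter B O)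
    (hσ : σ ∈ autFixingCompl B O) : σ ^ 2 = 1 := by
  refine Equiv.ext fun z => ?_
  by_cases hz : z ∈ O
  · have hσz := apply_mem_of_mem_autFixingCompl hσ hz
    -- `σ` is the translation by `σ z - z`, which carries `σ z` back to `z`
    exact IsTranslate.unique hD hO (apply_mem_of_mem_autFixingCompl hσ hσz) hz
      (isTranslate_of_mem_autFixingCompl hD hO hσ hz hσz) (IsTranslate.symm fun b _ => Iff.rfl)
  · simp [sq, (mem_autFixingCompl.1 hσ).2 z hz]

theorem card_autFixingCompl (hD : IsDesign B) (hO : IsCenter B O) :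
    Nat.card (autFixingCompl B O) = 8 := by
  obtain ⟨x, hx⟩ : O.Nonempty := card_pos.1 (by rw [card_eq_eight hD hO]; norm_num)
  rw [Nat.card_eq_of_bijective (fun σ => (⟨σ.1 x, apply_mem_of_mem_autFixingCompl σ.2 hx⟩ : O)),
    Nat.card_eq_fintype_card, Fintype.card_coe, card_eq_eight hD hO]
  refine ⟨fun σ τ h => Subtype.ext (eq_of_apply_eq hD hO σ.2 τ.2 hx (congrArg Subtype.val h)),
    fun y => ?_⟩
  obtain ⟨σ, hσ, hσx⟩ := exists_mem_autFixingCompl hD hO hx y.2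
  exact ⟨⟨σ, hσ⟩, Subtype.ext hσx⟩

end IsCenter

open IsCenter in
/-- if the block family of a symmetric (15,8,4)-design has a center point
`O`, then `Aut(𝒟)` contains a subgroup `H ≅ (ZMod 2)³` whose elements fix every point
outside `O` and which acts sharply transitively on the 8 points of `O`; in particular
the design is 7-pyramidal. -/
theorem stmt18 (B : Finset (Finset (Fin 15))) (hD : IsDesign B)
    (O : Finset (Fin 15)) (hO : IsCenter B O) :
    ∃ H : Subgroup (Equiv.Perm (Fin 15)),
      H ≤ designAut B ∧
      Nonempty (↥H ≃* Multiplicative (ZMod 2 × ZMod 2 × ZMod 2)) ∧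
      (∀ σ ∈ H, ∀ x : Fin 15, x ∉ O → σ x = x) ∧
      (∀ x ∈ O, ∀ y ∈ O, ∃! σ : Equiv.Perm (Fin 15), σ ∈ H ∧ σ x = y) := by
  refine ⟨autFixingCompl B O, inf_le_left, ?_, fun σ hσ => (mem_autFixingCompl.1 hσ).2,
    fun x hx y hy => ?_⟩
  · refine nonempty_mulEquiv_of_sq_eq_one
      (fun σ => Subtype.ext (sq_eq_one_of_mem_autFixingCompl hD hO σ.2)) (by decide) ?_
    rw [card_autFixingCompl hD hO]
    simp
  · obtain ⟨σ, hσ, hσx⟩ := exists_mem_autFixingCompl hD hO hx hy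
    exact ⟨σ, ⟨hσ, hσx⟩, fun τ hτ => eq_of_apply_eq hD hO hτ.1 hσ hx (hτ.2.trans hσx.symm)⟩
end

section
/- If 𝒟 is a symmetric (15,8,4)-design of type (C1), then every point i ∈ Fin 15 is contained in exactly 8 blocks of 𝓑 and the intersection of all blocks containing i equals {i}; consequently, the only permutation of Fin 15 that fixes every block of 𝓑 setwise is the identity. -/
private lemma count_sum' (C : Finset (Finset (Fin 15))) (S : Finset (Fin 15)) :
    ∑ j ∈ S, (C.filter (fun b => j ∈ b)).card = ∑ b ∈ C, (b ∩ S).card := by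
  simp only [Finset.card_filter]
  rw [Finset.sum_comm]
  refine Finset.sum_congr rfl fun b _ => ?_
  rw [← Finset.card_filter]
  congr 1
  ext j
  simp only [Finset.mem_filter, Finset.mem_inter]
  tauto

private lemma count_sq_sum' (C : Finset (Finset (Fin 15))) (S : Finset (Fin 15)) :
    ∑ j ∈ S, (C.filter (fun b => j ∈ b)).card * (C.filter (fun b => j ∈ b)).card
      = ∑ b ∈ C, ∑ b' ∈ C, (b ∩ b' ∩ S).card := by
  have key : ∀ j : Fin 15, (C.filter (fun b => j ∈ b)).card * (C.filter (fun b => j ∈ b)).card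
      = ∑ b ∈ C, ∑ b' ∈ C, if j ∈ b ∧ j ∈ b' then 1 else 0 := by
    intro j
    rw [Finset.card_filter, Finset.sum_mul_sum]
    refine Finset.sum_congr rfl fun b _ => Finset.sum_congr rfl fun b' _ => ?_
    by_cases h1 : j ∈ b <;> by_cases h2 : j ∈ b' <;> simp [h1, h2]
  rw [Finset.sum_congr rfl fun j _ => key j, Finset.sum_comm]
  refine Finset.sum_congr rfl fun b _ => ?_
  rw [Finset.sum_comm]
  refine Finset.sum_congr rfl fun b' _ => ?_
  rw [← Finset.card_filter]
  congr 1
  ext j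
  simp only [Finset.mem_filter, Finset.mem_inter]
  tauto

private lemma variance_zero' {α : Type*} (S : Finset α) (f : α → ℕ) (m : ℕ)
    (h1 : ∑ j ∈ S, f j = m * S.card) (h2 : ∑ j ∈ S, f j * f j = m * m * S.card) :
    ∀ j ∈ S, f j = m := by
  have key : ∑ j ∈ S, ((f j : ℤ) - m) ^ 2 = 0 := by
    have expand : ∀ j ∈ S, ((f j : ℤ) - m) ^ 2
        = (f j : ℤ) * f j - 2 * m * f j + m * m := fun j _ => by ring
    rw [Finset.sum_congr rfl expand, Finset.sum_add_distrib, Finset.sum_sub_distrib,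
      ← Finset.mul_sum, Finset.sum_const, nsmul_eq_mul]
    have c1 := congrArg (fun n : ℕ => (n : ℤ)) h2
    have c2 := congrArg (fun n : ℕ => (n : ℤ)) h1
    push_cast at c1 c2
    rw [c1, c2]; ring
  intro j hj
  have := (Finset.sum_eq_zero_iff_of_nonneg (fun j _ => sq_nonneg _)).mp key j hj
  have : (f j : ℤ) = m := by nlinarith [this]
  exact_mod_cast this

private lemma lam4' (C : Finset (Finset (Fin 15))) (i : Fin 15) (hCcard : C.card = 8)
    (hCi : ∀ b ∈ C, i ∈ b) (hsz : ∀ b ∈ C, b.card = 8)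
    (hint : ∀ b ∈ C, ∀ b' ∈ C, b ≠ b' → (b ∩ b').card = 4) :
    ∀ j : Fin 15, j ≠ i → (C.filter (fun b => j ∈ b)).card = 4 := by
  intro j hj
  have s1 : ∑ j ∈ Finset.univ.erase i, (C.filter (fun b => j ∈ b)).card
      = 4 * (Finset.univ.erase i).card := by
    rw [count_sum' C (Finset.univ.erase i)]
    have e : ∀ b ∈ C, (b ∩ Finset.univ.erase i).card = 7 := by
      intro b hb
      have hbe : b ∩ Finset.univ.erase i = b.erase i := by
        ext x
        simp only [Finset.mem_inter, Finset.mem_erase, Finset.mem_univ, and_true, true_and]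
        tauto
      rw [hbe, Finset.card_erase_of_mem (hCi b hb), hsz b hb]
    rw [Finset.sum_congr rfl e, Finset.sum_const, hCcard,
      Finset.card_erase_of_mem (Finset.mem_univ i)]
    norm_num
  have s2 : ∑ j ∈ Finset.univ.erase i,
      (C.filter (fun b => j ∈ b)).card * (C.filter (fun b => j ∈ b)).card
      = 4 * 4 * (Finset.univ.erase i).card := by
    rw [count_sq_sum' C (Finset.univ.erase i)]
    have inner : ∀ b ∈ C, ∑ b' ∈ C, (b ∩ b' ∩ Finset.univ.erase i).card = 28 := by
      intro b hb
      have e : ∀ b' ∈ C, (b ∩ b' ∩ Finset.univ.erase i).card = (b ∩ b').card - 1 := by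
        intro b' hb'
        have hmem : i ∈ b ∩ b' := Finset.mem_inter.mpr ⟨hCi b hb, hCi b' hb'⟩
        have hbe : b ∩ b' ∩ Finset.univ.erase i = (b ∩ b').erase i := by
          ext x
          simp only [Finset.mem_inter, Finset.mem_erase, Finset.mem_univ, and_true, true_and]
          tauto
        rw [hbe, Finset.card_erase_of_mem hmem]
      rw [Finset.sum_congr rfl e, ← Finset.sum_erase_add _ _ hb]
      have hbb : (b ∩ b).card - 1 = 7 := by
        rw [Finset.inter_self, hsz b hb]
      have e2 : ∀ b' ∈ C.erase b, (b ∩ b').card - 1 = 3 := by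
        intro b' hb'
        rw [hint b hb b' (Finset.mem_of_mem_erase hb')
          (Ne.symm (Finset.ne_of_mem_erase hb'))]
      rw [Finset.sum_congr rfl e2, Finset.sum_const, Finset.card_erase_of_mem hb, hCcard, hbb]
      norm_num
    rw [Finset.sum_congr rfl inner, Finset.sum_const, hCcard,
      Finset.card_erase_of_mem (Finset.mem_univ i)]
    norm_num
  exact variance_zero' _ _ 4 s1 s2 j (Finset.mem_erase.mpr ⟨hj, Finset.mem_univ j⟩)

set_option maxHeartbeats 1000000 in
/-- for a design of type (C1), every point lies in exactly 8 blocks and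
the intersection of the blocks through a point `i` is `{i}`; consequently the only
permutation fixing every block setwise is the identity. -/
theorem stmt19 (B : Finset (Finset (Fin 15))) (hD : IsDesign B)
    (hC1 : ∀ b ∈ B, IsCenter B b) :
    (∀ i : Fin 15, (B.filter (fun b => i ∈ b)).card = 8 ∧
      ∀ j : Fin 15, ((∀ b ∈ B, i ∈ b → j ∈ b) ↔ j = i)) ∧
    ∀ σ : Equiv.Perm (Fin 15), (∀ b ∈ B, b.image ⇑σ = b) → σ = 1 := by
  obtain ⟨hBcard, hsize, hint⟩ := hD
  have pair_sum : ∀ b ∈ B, ∑ b' ∈ B, (b ∩ b').card = 64 := by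
    intro b hb
    rw [← Finset.sum_erase_add _ _ hb]
    have hbb : (b ∩ b).card = 8 := by rw [Finset.inter_self]; exact hsize b hb
    have h2 : ∑ b' ∈ B.erase b, (b ∩ b').card = 56 := by
      have e : ∀ b' ∈ B.erase b, (b ∩ b').card = 4 := fun b' hb' =>
        hint b hb b' (Finset.mem_of_mem_erase hb') (Ne.symm (Finset.ne_of_mem_erase hb'))
      rw [Finset.sum_congr rfl e, Finset.sum_const, Finset.card_erase_of_mem hb, hBcard]
      norm_num
    omega
  have h1 : ∑ j : Fin 15, (B.filter (fun b => j ∈ b)).card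
      = 8 * (Finset.univ : Finset (Fin 15)).card := by
    rw [count_sum' B Finset.univ]
    have e : ∀ b ∈ B, (b ∩ Finset.univ).card = 8 := fun b hb => by
      rw [Finset.inter_univ]; exact hsize b hb
    rw [Finset.sum_congr rfl e, Finset.sum_const, hBcard]
    norm_num
  have h2 : ∑ j : Fin 15, (B.filter (fun b => j ∈ b)).card * (B.filter (fun b => j ∈ b)).card
      = 8 * 8 * (Finset.univ : Finset (Fin 15)).card := by
    rw [count_sq_sum' B Finset.univ]
    have e : ∀ b ∈ B, ∑ b' ∈ B, (b ∩ b' ∩ Finset.univ).card = 64 := fun b hb => by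
      simpa only [Finset.inter_univ] using pair_sum b hb
    rw [Finset.sum_congr rfl e, Finset.sum_const, hBcard]
    norm_num
  have ra : ∀ i : Fin 15, (B.filter (fun b => i ∈ b)).card = 8 := fun i =>
    variance_zero' Finset.univ _ 8 h1 h2 i (Finset.mem_univ i)
  have lam : ∀ i j : Fin 15, j ≠ i →
      ((B.filter (fun b => i ∈ b)).filter (fun b => j ∈ b)).card = 4 := by
    intro i j hj
    exact lam4' (B.filter (fun b => i ∈ b)) i (ra i)
      (fun b hb => (Finset.mem_filter.mp hb).2)
      (fun b hb => hsize b (Finset.mem_filter.mp hb).1)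
      (fun b hb b' hb' hne =>
        hint b (Finset.mem_filter.mp hb).1 b' (Finset.mem_filter.mp hb').1 hne) j hj
  have key : ∀ i j : Fin 15, (∀ b ∈ B, i ∈ b → j ∈ b) ↔ j = i := by
    intro i j
    constructor
    · intro h
      by_contra hj
      have heq : (B.filter (fun b => i ∈ b)).filter (fun b => j ∈ b)
          = B.filter (fun b => i ∈ b) :=
        Finset.filter_true_of_mem fun b hb =>
          h b (Finset.mem_filter.mp hb).1 (Finset.mem_filter.mp hb).2
      have h4 := lam i j hj
      rw [heq, ra i] at h4
      exact absurd h4 (by norm_num)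
    · rintro rfl; exact fun b _ h => h
  refine ⟨fun i => ⟨ra i, key i⟩, fun σ hσ => ?_⟩
  exact Equiv.ext fun x => (key x (σ x)).mp fun b hb hx => by
    rw [← hσ b hb]; exact Finset.mem_image_of_mem _ hx
end
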